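/- arXiv:1603.07991 — 5 statements merged into one kernel-verified Lean document; each statement's English description precedes it below -/
import Mathlib

section
/- Any connected configuration of n ≥ 2 particles on the triangular lattice with no holes has perimeter at least √n. -/
open Finset

/-- The six neighbor displacement vectors of the triangular lattice Γ, realized on ℤ × ℤ. -/
def triNbrs : List (ℤ × ℤ) := [(1,0), (-1,0), (0,1), (0,-1), (1,1), (-1,-1)]

/-- Translation of a lattice point by a displacement. -/
def shift (v d : ℤ × ℤ) : ℤ × ℤ := (v.1 + d.1, v.2 + d.2)

/-- Adjacency in the triangular lattice Γ. -/
def TriAdj (v w : ℤ × ℤ) : Prop := (w.1 - v.1, w.2 - v.2) ∈ triNbrs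

/-- A particle configuration: a finite set of occupied vertices of Γ. -/
abbrev Config := Finset (ℤ × ℤ)

/-- A configuration is connected if it is nonempty and any two occupied vertices are
joined by a path through occupied vertices. -/
def ConnectedConfig (σ : Config) : Prop :=
  σ.Nonempty ∧ ∀ v ∈ σ, ∀ w ∈ σ,
    Relation.ReflTransGen (fun a b => TriAdj a b ∧ a ∈ σ ∧ b ∈ σ) v w

/-- The connected component of a vertex within the set of unoccupied vertices. -/
def compComponent (σ : Config) (v : ℤ × ℤ) : Set (ℤ × ℤ) :=
  {w | Relation.ReflTransGen (fun a b => TriAdj a b ∧ a ∉ σ ∧ b ∉ σ) v w}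

/-- A hole is a finite maximal component of unoccupied vertices; σ is hole-free
exactly when every unoccupied vertex lies in an infinite component of unoccupied vertices. -/
def HoleFree (σ : Config) : Prop := ∀ v, v ∉ σ → (compComponent σ v).Infinite

/-- Number of triangles of σ: lattice faces with all three vertices occupied.
The faces of Γ are the upward faces {v, v+(1,0), v+(1,1)} and the downward faces
{v, v+(0,1), v+(1,1)}. -/
def triangles (σ : Config) : ℕ :=
  (σ.filter (fun v => shift v (1,0) ∈ σ ∧ shift v (1,1) ∈ σ)).card +
  (σ.filter (fun v => shift v (0,1) ∈ σ ∧ shift v (1,1) ∈ σ)).card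

/-- Number of edges of σ: lattice edges with both endpoints occupied. -/
def edges (σ : Config) : ℕ :=
  (σ.filter (fun v => shift v (1,0) ∈ σ)).card +
  (σ.filter (fun v => shift v (0,1) ∈ σ)).card +
  (σ.filter (fun v => shift v (1,1) ∈ σ)).card

/-- Perimeter of σ: the length of the boundary walk around σ.  For a connected
hole-free configuration, the boundary walk traverses each occupied edge once for
each of its two adjacent lattice faces that is not fully occupied (so an edge
traversed twice is counted twice).  The two faces adjacent to the edge v–v+(1,0)
have third vertices v+(1,1) and v+(0,-1); those adjacent to v–v+(0,1) have third
vertices v+(1,1) and v+(-1,0); those adjacent to v–v+(1,1) have third vertices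
v+(1,0) and v+(0,1). -/
def perim (σ : Config) : ℕ :=
  (∑ v ∈ σ.filter (fun v => shift v (1,0) ∈ σ),
    ((if shift v (1,1) ∈ σ then 0 else 1) + (if shift v (0,-1) ∈ σ then 0 else 1))) +
  (∑ v ∈ σ.filter (fun v => shift v (0,1) ∈ σ),
    ((if shift v (1,1) ∈ σ then 0 else 1) + (if shift v (-1,0) ∈ σ then 0 else 1))) +
  (∑ v ∈ σ.filter (fun v => shift v (1,1) ∈ σ),
    ((if shift v (1,0) ∈ σ then 0 else 1) + (if shift v (0,1) ∈ σ then 0 else 1)))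

/-- Lexicographic order on lattice points, used to normalize configurations up to
translation. -/
def lexLe (a b : ℤ × ℤ) : Prop := a.1 < b.1 ∨ (a.1 = b.1 ∧ a.2 ≤ b.2)

/-- A configuration is normalized if its lexicographically least vertex is the origin;
each translation equivalence class of configurations contains exactly one normalized
representative, so normalized configurations count configurations up to translation. -/
def Normalized (σ : Config) : Prop := ((0,0) : ℤ × ℤ) ∈ σ ∧ ∀ v ∈ σ, lexLe (0,0) v

/-- A function is subexponential if it is eventually dominated by every exponential. -/
def Subexp (f : ℕ → ℝ) : Prop := ∀ c : ℝ, 1 < c → ∀ᶠ k in Filter.atTop, f k ≤ c ^ k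

/-!
The perimeter counts each occupied edge once for every adjacent face that is not fully occupied.
If σ occupies `c` columns, connectivity makes every vertical line between its leftmost and
rightmost column cross an occupied edge; the face above the highest crossing edge and the face
below the lowest one are not full, which gives `2 (c - 1)` distinct boundary sides, so
`2 c ≤ p + 2`. By the symmetry `(x, y) ↦ (y, x)` of the lattice the same holds for the number `r`
of occupied rows, and then `n ≤ c r ≤ (p / 2 + 1)² ≤ p²` once `p ≥ 2`, which `n ≥ 2` forces.
-/

/-- The occupied edges `v — v + e` whose lattice face with third vertex `v + t` is not full. -/
def boundarySide (σ : Config) (e t : ℤ × ℤ) : Finset (ℤ × ℤ) :=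
  σ.filter (fun v => shift v e ∈ σ ∧ shift v t ∉ σ)

lemma sum_filter_ite_add_ite (σ : Config) (e a b : ℤ × ℤ) :
    (∑ v ∈ σ.filter (fun v => shift v e ∈ σ),
      ((if shift v a ∈ σ then 0 else 1) + (if shift v b ∈ σ then 0 else 1))) =
    #(boundarySide σ e a) + #(boundarySide σ e b) := by
  rw [sum_add_distrib]
  congr 1 <;>
  · rw [boundarySide, ← filter_filter, card_filter]
    exact sum_congr rfl fun v _ => by split_ifs <;> simp_all

lemma perim_eq_sum_card_boundarySide (σ : Config) :
    perim σ = #(boundarySide σ (1,0) (1,1)) + #(boundarySide σ (1,0) (0,-1)) +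
      #(boundarySide σ (0,1) (1,1)) + #(boundarySide σ (0,1) (-1,0)) +
      #(boundarySide σ (1,1) (1,0)) + #(boundarySide σ (1,1) (0,1)) := by
  rw [perim, sum_filter_ite_add_ite, sum_filter_ite_add_ite, sum_filter_ite_add_ite]
  ring

lemma mem_image_swap {α β : Type*} [DecidableEq α] [DecidableEq β] {s : Finset (α × β)}
    {w : β × α} : w ∈ s.image Prod.swap ↔ w.swap ∈ s := by
  simp [Prod.swap_eq_iff_eq_swap]

lemma shift_swap (v d : ℤ × ℤ) : shift v.swap d = (shift v d.swap).swap := rfl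

lemma card_boundarySide_image_swap (σ : Config) (e t : ℤ × ℤ) :
    #(boundarySide (σ.image Prod.swap) e t) = #(boundarySide σ e.swap t.swap) := by
  have : boundarySide (σ.image Prod.swap) e t =
      (boundarySide σ e.swap t.swap).image Prod.swap := by
    ext w
    simp only [boundarySide, mem_filter, mem_image_swap, shift_swap, Prod.swap_swap]
  rw [this, card_image_of_injective _ Prod.swap_injective]

lemma perim_image_swap (σ : Config) : perim (σ.image Prod.swap) = perim σ := by
  simp only [perim_eq_sum_card_boundarySide, card_boundarySide_image_swap, Prod.swap_prod_mk]
  ring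

lemma TriAdj.swap {a b : ℤ × ℤ} (h : TriAdj a b) : TriAdj a.swap b.swap := by
  simp only [TriAdj, triNbrs, List.mem_cons, Prod.mk.injEq, List.not_mem_nil, or_false,
    Prod.fst_swap, Prod.snd_swap] at h ⊢
  omega

lemma ConnectedConfig.image_swap {σ : Config} (hσ : ConnectedConfig σ) :
    ConnectedConfig (σ.image Prod.swap) := by
  refine ⟨hσ.1.image _, fun v hv w hw => ?_⟩
  have := (hσ.2 v.swap (mem_image_swap.1 hv) w.swap (mem_image_swap.1 hw)).lift Prod.swap
    (p := fun a b => TriAdj a b ∧ a ∈ σ.image Prod.swap ∧ b ∈ σ.image Prod.swap)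
    fun a b hab => ⟨hab.1.swap, mem_image_swap.2 (by simpa using hab.2.1),
      mem_image_swap.2 (by simpa using hab.2.2)⟩
  rwa [Function.onFun, Prod.swap_swap, Prod.swap_swap] at this

/-- Some occupied edge crosses the vertical line through `x + 1/2`. -/
def CrossesColumn (σ : Config) (x : ℤ) : Prop :=
  ∃ v ∈ σ, v.1 = x ∧ (shift v (1,0) ∈ σ ∨ shift v (1,1) ∈ σ)

lemma crossesColumn_of_reflTransGen {σ : Config} {v w : ℤ × ℤ}
    (h : Relation.ReflTransGen (fun a b => TriAdj a b ∧ a ∈ σ ∧ b ∈ σ) v w) {x : ℤ}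
    (hvx : v.1 ≤ x) (hxw : x < w.1) : CrossesColumn σ x := by
  induction h with
  | refl => omega
  | @tail b c _ hbc ih =>
    by_cases hb : x < b.1
    · exact ih hb
    obtain ⟨hadj, hb, hc⟩ := hbc
    obtain ⟨b1, b2⟩ := b
    obtain ⟨c1, c2⟩ := c
    simp only [TriAdj, triNbrs, List.mem_cons, Prod.mk.injEq, List.not_mem_nil,
      or_false] at hadj
    refine ⟨(b1, b2), hb, by simp only at *; omega, ?_⟩
    simp only [shift] at hxw ⊢
    rcases hadj with ⟨h1, h2⟩ | ⟨h1, h2⟩ | ⟨h1, h2⟩ | ⟨h1, h2⟩ | ⟨h1, h2⟩ | ⟨h1, h2⟩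
    · left; convert hc using 2 <;> omega
    all_goals first | omega | (right; convert hc using 2 <;> omega)

lemma CrossesColumn.exists_top {σ : Config} {x : ℤ} (h : CrossesColumn σ x) :
    ∃ v ∈ boundarySide σ (1,0) (1,1) ∪ boundarySide σ (1,1) (0,1), v.1 = x := by
  obtain ⟨v, hv, hvmax⟩ := exists_max_image
    (σ.filter fun v => v.1 = x ∧ (shift v (1,0) ∈ σ ∨ shift v (1,1) ∈ σ)) Prod.snd
    (by obtain ⟨v, hv, hvx, hve⟩ := h; exact ⟨v, mem_filter.2 ⟨hv, hvx, hve⟩⟩)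
  obtain ⟨hvσ, hvx, hve⟩ := mem_filter.1 hv
  -- `v` starts the highest edge crossing the column, so the face above that edge is not full
  refine ⟨v, ?_, hvx⟩
  simp only [mem_union, boundarySide, mem_filter]
  by_cases hd : shift v (1,1) ∈ σ
  · refine Or.inr ⟨hvσ, hd, fun hup => ?_⟩
    have := hvmax (shift v (0,1)) (mem_filter.2 ⟨hup, by simp [shift, hvx], Or.inl ?_⟩)
    · simp [shift] at this
    · simpa [shift, add_assoc] using hd
  · exact Or.inl ⟨hvσ, hve.resolve_right hd, hd⟩

lemma CrossesColumn.exists_bottom {σ : Config} {x : ℤ} (h : CrossesColumn σ x) :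
    ∃ v ∈ boundarySide σ (1,0) (0,-1) ∪ boundarySide σ (1,1) (1,0), v.1 = x := by
  obtain ⟨v, hv, hvmin⟩ := exists_min_image
    (σ.filter fun v => v.1 = x ∧ (shift v (1,0) ∈ σ ∨ shift v (1,1) ∈ σ)) Prod.snd
    (by obtain ⟨v, hv, hvx, hve⟩ := h; exact ⟨v, mem_filter.2 ⟨hv, hvx, hve⟩⟩)
  obtain ⟨hvσ, hvx, hve⟩ := mem_filter.1 hv
  refine ⟨v, ?_, hvx⟩
  simp only [mem_union, boundarySide, mem_filter]
  by_cases hh : shift v (1,0) ∈ σ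
  · refine Or.inl ⟨hvσ, hh, fun hdown => ?_⟩
    have := hvmin (shift v (0,-1)) (mem_filter.2 ⟨hdown, by simp [shift, hvx], Or.inr ?_⟩)
    · simp [shift] at this
    · simpa [shift, add_assoc] using hh
  · exact Or.inr ⟨hvσ, hve.resolve_left hh, hh⟩

lemma card_le_card_add_card_add_one {X : Finset ℤ} {m : ℤ} {s t : Finset (ℤ × ℤ)}
    (h : ∀ x ∈ X, x ≠ m → ∃ v ∈ s ∪ t, v.1 = x) : #X ≤ #s + #t + 1 := by
  have hX : X ⊆ insert m ((s ∪ t).image Prod.fst) := fun x hx => by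
    by_cases hxm : x = m
    · exact hxm ▸ mem_insert_self _ _
    · obtain ⟨v, hv, rfl⟩ := h x hx hxm
      exact mem_insert_of_mem (mem_image_of_mem _ hv)
  calc #X ≤ #((s ∪ t).image Prod.fst) + 1 := (card_le_card hX).trans (card_insert_le _ _)
    _ ≤ #s + #t + 1 := by gcongr; exact card_image_le.trans (card_union_le s t)

lemma ConnectedConfig.two_mul_card_image_fst_le_perim {σ : Config} (hσ : ConnectedConfig σ) :
    2 * #(σ.image Prod.fst) ≤ perim σ + 2 := by
  obtain ⟨w, hw, hwmax⟩ := exists_max_image σ Prod.fst hσ.1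
  have hcross : ∀ x ∈ σ.image Prod.fst, x ≠ w.1 → CrossesColumn σ x := by
    intro x hx hxw
    obtain ⟨v, hv, rfl⟩ := mem_image.1 hx
    exact crossesColumn_of_reflTransGen (hσ.2 v hv w hw) le_rfl
      (lt_of_le_of_ne (hwmax v hv) hxw)
  have htop := card_le_card_add_card_add_one fun x hx hxw => (hcross x hx hxw).exists_top
  have hbot := card_le_card_add_card_add_one fun x hx hxw => (hcross x hx hxw).exists_bottom
  rw [perim_eq_sum_card_boundarySide]
  omega

lemma ConnectedConfig.two_mul_card_image_snd_le_perim {σ : Config} (hσ : ConnectedConfig σ) :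
    2 * #(σ.image Prod.snd) ≤ perim σ + 2 := by
  have := hσ.image_swap.two_mul_card_image_fst_le_perim
  rwa [perim_image_swap, image_image] at this

lemma card_le_card_image_fst_mul_card_image_snd {α β : Type*} [DecidableEq α] [DecidableEq β]
    (s : Finset (α × β)) : #s ≤ #(s.image Prod.fst) * #(s.image Prod.snd) :=
  (card_le_card subset_product).trans_eq (card_product _ _)

lemma le_mul_self_of_le_mul {n c r p : ℕ} (hn : 2 ≤ n) (hncr : n ≤ c * r)
    (hc : 2 * c ≤ p + 2) (hr : 2 * r ≤ p + 2) : n ≤ p * p := by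
  have hp : 2 ≤ p := by
    by_contra! hp
    have : c * r ≤ 1 * 1 := Nat.mul_le_mul (by omega) (by omega)
    omega
  nlinarith

theorem min_perimeter_sqrt_general (σ : Config) (n : ℕ) (hn : 2 ≤ n)
    (hcard : σ.card = n) (hconn : ConnectedConfig σ) :
    Real.sqrt n ≤ (perim σ : ℝ) := by
  have hbox := hcard ▸ card_le_card_image_fst_mul_card_image_snd σ
  have h := le_mul_self_of_le_mul hn hbox hconn.two_mul_card_image_fst_le_perim
    hconn.two_mul_card_image_snd_le_perim
  rw [Real.sqrt_le_left (Nat.cast_nonneg _), sq]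
  exact_mod_cast h

/-- Lemma 1 of the paper: any connected configuration of n ≥ 2
particles on the triangular lattice with no holes has perimeter at least √n. -/
theorem min_perimeter_sqrt (σ : Config) (n : ℕ) (hn : 2 ≤ n)
    (hcard : σ.card = n) (hconn : ConnectedConfig σ) (hhole : HoleFree σ) :
    Real.sqrt n ≤ (perim σ : ℝ) :=
  min_perimeter_sqrt_general σ n hn hcard hconn
end

section
/- For a connected particle configuration σ of n particles on the triangular lattice with no holes, the number of edges satisfies e(σ) = 3n − p(σ) − 3. -/
open Finset

/-!
Each occupied edge borders two faces of `Γ` and each fully occupied face has three edges, so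
`p = 2e - 3t`, and the claim becomes Euler's formula `n - e + t = 1`. It is proved by removing
the lexicographically last particle `v`, which preserves `n - e + t` except when the left and
lower neighbours of `v` are occupied and the corner between them is vacant. In that case a
discrete Jordan curve argument (a winding number around the vacant corner, which must vanish
because the corner is not in a hole) shows that `σ ∖ {v}` splits into two components, each
again connected and hole-free.
-/

lemma triAdj_iff {v w : ℤ × ℤ} : TriAdj v w ↔
    (w.1 = v.1 + 1 ∧ w.2 = v.2) ∨ (w.1 = v.1 - 1 ∧ w.2 = v.2) ∨
    (w.1 = v.1 ∧ w.2 = v.2 + 1) ∨ (w.1 = v.1 ∧ w.2 = v.2 - 1) ∨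
    (w.1 = v.1 + 1 ∧ w.2 = v.2 + 1) ∨ (w.1 = v.1 - 1 ∧ w.2 = v.2 - 1) := by
  simp only [TriAdj, triNbrs, List.mem_cons, List.not_mem_nil, or_false, Prod.mk.injEq]
  omega

lemma TriAdj.symm {v w : ℤ × ℤ} (h : TriAdj v w) : TriAdj w v := by
  rw [triAdj_iff] at h ⊢
  omega

lemma TriAdj.ne {v w : ℤ × ℤ} (h : TriAdj v w) : v ≠ w := by
  rintro rfl
  rw [triAdj_iff] at h
  omega

lemma triAdj_shift (v : ℤ × ℤ) {d : ℤ × ℤ} (hd : d ∈ triNbrs) : TriAdj v (shift v d) := by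
  simpa [TriAdj, shift] using hd

def OccAdj (σ : Config) (a b : ℤ × ℤ) : Prop := TriAdj a b ∧ a ∈ σ ∧ b ∈ σ

def VacAdj (σ : Config) (a b : ℤ × ℤ) : Prop := TriAdj a b ∧ a ∉ σ ∧ b ∉ σ

instance (σ : Config) : Std.Symm (OccAdj σ) := ⟨fun _ _ h => ⟨h.1.symm, h.2.2, h.2.1⟩⟩

lemma OccAdj.mono {σ τ : Config} (h : σ ⊆ τ) {a b : ℤ × ℤ} (hab : OccAdj σ a b) :
    OccAdj τ a b :=
  ⟨hab.1, h hab.2.1, h hab.2.2⟩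

lemma VacAdj.anti {σ τ : Config} (h : σ ⊆ τ) {a b : ℤ × ℤ} (hab : VacAdj τ a b) :
    VacAdj σ a b :=
  ⟨hab.1, fun ha => hab.2.1 (h ha), fun hb => hab.2.2 (h hb)⟩

section Winding

def walkSum {α : Type*} (f : α → α → ℤ) : List α → ℤ
  | x :: y :: l => f x y + walkSum f (y :: l)
  | _ => 0

lemma walkSum_eq_sub_of_isChain {α : Type*} {R : α → α → Prop} {f : α → α → ℤ} {g : α → ℤ}
    (hf : ∀ p q, R p q → f p q = g q - g p) :
    ∀ {a : α} {l : List α}, List.IsChain R (a :: l) →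
      walkSum f (a :: l) = g ((a :: l).getLast (List.cons_ne_nil a l)) - g a
  | _, [], _ => by simp [walkSum]
  | a, b :: l, hl => by
    rw [List.isChain_cons_cons] at hl
    rw [walkSum, walkSum_eq_sub_of_isChain hf hl.2, hf a b hl.1, List.getLast_cons_cons]
    ring

lemma walkSum_sub {α : Type*} (f f' : α → α → ℤ) :
    ∀ l : List α, walkSum f l - walkSum f' l = walkSum (fun p q => f p q - f' p q) l
  | x :: y :: l => by rw [walkSum, walkSum, walkSum, ← walkSum_sub f f' (y :: l)]; ring
  | [] | [_] => by simp [walkSum]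

def IsClosedWalk (σ : Config) (a : ℤ × ℤ) (l : List (ℤ × ℤ)) : Prop :=
  List.IsChain (OccAdj σ) (a :: l) ∧ (a :: l).getLast (List.cons_ne_nil a l) = a

lemma IsClosedWalk.walkSum_eq_zero {σ : Config} {a : ℤ × ℤ} {l : List (ℤ × ℤ)}
    (hw : IsClosedWalk σ a l) {f : ℤ × ℤ → ℤ × ℤ → ℤ} (g : ℤ × ℤ → ℤ)
    (hf : ∀ p q, OccAdj σ p q → f p q = g q - g p) : walkSum f (a :: l) = 0 := by
  rw [walkSum_eq_sub_of_isChain hf hw.1, hw.2, sub_self]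

/-- Signed number of times the step `p → q` crosses the horizontal ray from the point
`u + (1/2, 1/2)` towards `+∞` (upward crossings count `+1`). -/
def crossing (u p q : ℤ × ℤ) : ℤ :=
  (if p.2 = u.2 ∧ q.2 = u.2 + 1 ∧ u.1 < p.1 then 1 else 0) -
  (if q.2 = u.2 ∧ p.2 = u.2 + 1 ∧ u.1 < q.1 then 1 else 0)

def winding (u : ℤ × ℤ) (l : List (ℤ × ℤ)) : ℤ := walkSum (crossing u) l

lemma crossing_eq_crossing_right {u p q : ℤ × ℤ} (hp : p ≠ (u.1 + 1, u.2))
    (hq : q ≠ (u.1 + 1, u.2)) : crossing u p q = crossing (u.1 + 1, u.2) p q := by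
  rw [Ne, Prod.ext_iff] at hp hq
  simp only [crossing]
  split_ifs <;> omega

lemma crossing_sub_crossing_up {u p q w : ℤ × ℤ} (hpq : TriAdj p q) (hp : p ≠ u) (hq : q ≠ u)
    (hw : w = (u.1, u.2 + 1) ∨ w = (u.1 + 1, u.2 + 1)) (hpw : p ≠ w) (hqw : q ≠ w) :
    crossing u p q - crossing (u.1, u.2 + 1) p q =
      (if q.2 = u.2 + 1 ∧ u.1 < q.1 then 1 else 0) -
      (if p.2 = u.2 + 1 ∧ u.1 < p.1 then 1 else 0) := by
  rw [triAdj_iff] at hpq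
  rw [Ne, Prod.ext_iff] at hp hq hpw hqw
  simp only [crossing]
  rcases hw with rfl | rfl <;>
  rcases hpq with ⟨h1, h2⟩ | ⟨h1, h2⟩ | ⟨h1, h2⟩ | ⟨h1, h2⟩ | ⟨h1, h2⟩ | ⟨h1, h2⟩ <;>
  split_ifs <;> omega

section ClosedWalk

variable {σ : Config} {a : ℤ × ℤ} {l : List (ℤ × ℤ)}

lemma IsClosedWalk.winding_eq_of_forall (hw : IsClosedWalk σ a l) {u u' : ℤ × ℤ}
    (g : ℤ × ℤ → ℤ) (hg : ∀ p q, OccAdj σ p q → crossing u p q - crossing u' p q = g q - g p) :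
    winding u (a :: l) = winding u' (a :: l) := by
  have := hw.walkSum_eq_zero g hg
  rw [← walkSum_sub] at this
  exact sub_eq_zero.mp this

lemma IsClosedWalk.winding_right (hw : IsClosedWalk σ a l) {u : ℤ × ℤ}
    (hu : (u.1 + 1, u.2) ∉ σ) : winding u (a :: l) = winding (u.1 + 1, u.2) (a :: l) :=
  hw.winding_eq_of_forall 0 fun _ _ hpq => by
    rw [crossing_eq_crossing_right (ne_of_mem_of_not_mem hpq.2.1 hu)
      (ne_of_mem_of_not_mem hpq.2.2 hu)]
    simp

lemma IsClosedWalk.winding_up (hw : IsClosedWalk σ a l) {u w : ℤ × ℤ} (hu : u ∉ σ)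
    (hwu : w = (u.1, u.2 + 1) ∨ w = (u.1 + 1, u.2 + 1)) (hwσ : w ∉ σ) :
    winding u (a :: l) = winding (u.1, u.2 + 1) (a :: l) :=
  hw.winding_eq_of_forall _ fun _ _ hpq =>
    crossing_sub_crossing_up hpq.1 (ne_of_mem_of_not_mem hpq.2.1 hu)
      (ne_of_mem_of_not_mem hpq.2.2 hu) hwu (ne_of_mem_of_not_mem hpq.2.1 hwσ)
      (ne_of_mem_of_not_mem hpq.2.2 hwσ)

lemma IsClosedWalk.winding_eq_of_vacAdj (hw : IsClosedWalk σ a l) {u u' : ℤ × ℤ}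
    (h : VacAdj σ u u') : winding u (a :: l) = winding u' (a :: l) := by
  obtain ⟨hadj, hu, hu'⟩ := h
  rw [triAdj_iff] at hadj
  rcases hadj with ⟨h1, h2⟩ | ⟨h1, h2⟩ | ⟨h1, h2⟩ | ⟨h1, h2⟩ | ⟨h1, h2⟩ | ⟨h1, h2⟩
  · obtain rfl : u' = (u.1 + 1, u.2) := Prod.ext h1 h2
    exact hw.winding_right hu'
  · obtain rfl : u = (u'.1 + 1, u'.2) := Prod.ext (by omega) (by omega)
    exact (hw.winding_right hu).symm
  · obtain rfl : u' = (u.1, u.2 + 1) := Prod.ext h1 h2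
    exact hw.winding_up hu (Or.inl rfl) hu'
  · obtain rfl : u = (u'.1, u'.2 + 1) := Prod.ext (by omega) (by omega)
    exact (hw.winding_up hu' (Or.inl rfl) hu).symm
  · obtain rfl : u' = (u.1 + 1, u.2 + 1) := Prod.ext h1 h2
    rw [hw.winding_up hu (Or.inr rfl) hu']
    exact hw.winding_right hu'
  · obtain rfl : u = (u'.1 + 1, u'.2 + 1) := Prod.ext (by omega) (by omega)
    rw [hw.winding_up hu' (Or.inr rfl) hu]
    exact (hw.winding_right (u := (u'.1, u'.2 + 1)) hu).symm

lemma IsClosedWalk.winding_eq_of_reflTransGen (hw : IsClosedWalk σ a l) {u u' : ℤ × ℤ}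
    (h : Relation.ReflTransGen (VacAdj σ) u u') : winding u (a :: l) = winding u' (a :: l) := by
  induction h with
  | refl => rfl
  | tail _ hstep ih => exact ih.trans (hw.winding_eq_of_vacAdj hstep)

lemma IsClosedWalk.winding_eq_zero_of_far (hw : IsClosedWalk σ a l) {M : ℕ}
    (hσ : ∀ p ∈ σ, p.1.natAbs ≤ M ∧ p.2.natAbs ≤ M) {z : ℤ × ℤ}
    (hz : M < z.1.natAbs ∨ M < z.2.natAbs) : winding z (a :: l) = 0 := by
  -- Only a ray starting left of the walk meets it; it then cuts every row-change of the walk,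
  -- so the crossings telescope to the indicator of lying above the ray.
  refine hw.walkSum_eq_zero (fun r => if z.1 < -M ∧ z.2 < r.2 then 1 else 0) fun p q hpq => ?_
  have hp := hσ p hpq.2.1
  have hq := hσ q hpq.2.2
  have hadj := triAdj_iff.mp hpq.1
  simp only [crossing]
  split_ifs <;> omega

end ClosedWalk

end Winding

lemma exists_lexLe_of_nonempty {σ : Config} (hσ : σ.Nonempty) : ∃ v ∈ σ, ∀ w ∈ σ, lexLe w v := by
  obtain ⟨v, hv, hmax⟩ := σ.exists_max_image toLex hσ
  exact ⟨v, hv, fun w hw => Prod.Lex.le_iff.mp (hmax w hw)⟩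

lemma exists_natAbs_le (σ : Config) : ∃ M : ℕ, ∀ p ∈ σ, p.1.natAbs ≤ M ∧ p.2.natAbs ≤ M :=
  ⟨σ.sup fun p => max p.1.natAbs p.2.natAbs, fun _ hp =>
    max_le_iff.mp (le_sup (f := fun p : ℤ × ℤ => max p.1.natAbs p.2.natAbs) hp)⟩

lemma Set.Infinite.exists_natAbs_gt {S : Set (ℤ × ℤ)} (hS : S.Infinite) (M : ℕ) :
    ∃ z ∈ S, M < z.1.natAbs ∨ M < z.2.natAbs := by
  obtain ⟨z, hz, hbox⟩ :=
    hS.exists_notMem_finset (Finset.Icc (-M : ℤ) M ×ˢ Finset.Icc (-M : ℤ) M)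
  refine ⟨z, hz, ?_⟩
  simp only [mem_product, Finset.mem_Icc, not_and_or, not_le] at hbox
  omega

lemma compComponent_infinite_of_ray {τ : Config} {w u : ℤ × ℤ}
    (hwu : Relation.ReflTransGen (VacAdj τ) w u) (hray : ∀ k : ℕ, (u.1 + k, u.2) ∉ τ) :
    (compComponent τ w).Infinite := by
  have hmem : ∀ k : ℕ, (u.1 + k, u.2) ∈ compComponent τ w := by
    intro k
    induction k with
    | zero =>
      simp only [Nat.cast_zero, add_zero]
      exact hwu
    | succ k ih =>
      refine Relation.ReflTransGen.tail ih ⟨?_, hray k, by simpa [add_assoc] using hray (k + 1)⟩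
      rw [triAdj_iff]
      push_cast
      omega
  refine Set.infinite_of_injective_forall_mem (fun k k' h => ?_) hmem
  simp only [Prod.mk.injEq] at h
  omega

/-- The vacant point is joined through vacant sites to points far outside the walk. -/
lemma IsClosedWalk.winding_eq_zero {σ : Config} {a : ℤ × ℤ} {l : List (ℤ × ℤ)}
    (hw : IsClosedWalk σ a l) (hhole : HoleFree σ) {u : ℤ × ℤ} (hu : u ∉ σ) :
    winding u (a :: l) = 0 := by
  obtain ⟨M, hM⟩ := exists_natAbs_le σ
  obtain ⟨z, huz, hz⟩ := (hhole u hu).exists_natAbs_gt M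
  rw [hw.winding_eq_of_reflTransGen huz]
  exact hw.winding_eq_zero_of_far hM hz

section LexMax

variable {σ : Config} {v : ℤ × ℤ}

lemma notMem_of_lexLe (hmax : ∀ w ∈ σ, lexLe w v) {p : ℤ × ℤ}
    (hp : v.1 < p.1 ∨ (v.1 = p.1 ∧ v.2 < p.2)) : p ∉ σ := by
  intro h
  have := hmax p h
  unfold lexLe at this
  omega

lemma eq_of_occAdj_lexMax (hmax : ∀ w ∈ σ, lexLe w v) {s : ℤ × ℤ} (hs : OccAdj σ s v) :
    s = (v.1 - 1, v.2) ∨ s = (v.1, v.2 - 1) ∨ s = (v.1 - 1, v.2 - 1) := by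
  have h1 := hmax s hs.2.1
  have h2 := triAdj_iff.mp hs.1
  unfold lexLe at h1
  simp only [Prod.ext_iff]
  omega

/-- A path avoiding `v` would close up through `v` into a walk winding once around the vacant
corner `v - (1, 1)`. -/
lemma not_reflTransGen_erase_of_corner_vacant (hhole : HoleFree σ) (hv : v ∈ σ)
    (hmax : ∀ w ∈ σ, lexLe w v) (ha : (v.1 - 1, v.2) ∈ σ) (hc : (v.1, v.2 - 1) ∈ σ)
    (hb : (v.1 - 1, v.2 - 1) ∉ σ) :
    ¬ Relation.ReflTransGen (OccAdj (σ.erase v)) (v.1 - 1, v.2) (v.1, v.2 - 1) := by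
  intro hpath
  obtain ⟨l, hl, hlast⟩ := List.exists_isChain_cons_of_relationReflTransGen hpath
  have hw : IsClosedWalk σ (v.1, v.2 - 1) (v :: (v.1 - 1, v.2) :: l) := by
    refine ⟨?_, by simpa using hlast⟩
    simp only [List.isChain_cons_cons]
    refine ⟨⟨?_, hc, hv⟩, ⟨?_, hv, ha⟩, hl.imp fun _ _ h => h.mono (erase_subset v σ)⟩ <;>
    · rw [triAdj_iff]
      omega
  have hpath_zero : walkSum (crossing (v.1 - 1, v.2 - 1)) ((v.1 - 1, v.2) :: l) = 0 := by
    refine (walkSum_eq_sub_of_isChain (g := 0) (fun p q hpq => ?_) hl).trans (by simp)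
    obtain ⟨hadj, hp, hq⟩ := hpq
    have hpv := hmax p (mem_of_mem_erase hp)
    have hqv := hmax q (mem_of_mem_erase hq)
    have hp' := ne_of_mem_erase hp
    have hq' := ne_of_mem_erase hq
    rw [triAdj_iff] at hadj
    rw [Ne, Prod.ext_iff] at hp' hq'
    unfold lexLe at hpv hqv
    simp only [crossing, Pi.zero_apply]
    split_ifs <;> omega
  have hone : winding (v.1 - 1, v.2 - 1) ((v.1, v.2 - 1) :: v :: (v.1 - 1, v.2) :: l) = 1 := by
    rw [winding, walkSum, walkSum, hpath_zero]
    norm_num [crossing]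
    omega
  rw [hw.winding_eq_zero hhole hb] at hone
  exact zero_ne_one hone

end LexMax

section Components

def AdjClosed (τ A : Config) : Prop := ∀ x y, OccAdj τ x y → x ∈ A → y ∈ A

variable {τ A : Config} {x y : ℤ × ℤ}

lemma AdjClosed.reflTransGen (hA : AdjClosed τ A) (hx : x ∈ A)
    (hxy : Relation.ReflTransGen (OccAdj τ) x y) :
    Relation.ReflTransGen (OccAdj A) x y ∧ y ∈ A := by
  induction hxy with
  | refl => exact ⟨.refl, hx⟩
  | tail _ hyz ih =>
    have hz := hA _ _ hyz ih.2
    exact ⟨ih.1.tail ⟨hyz.1, ih.2, hz⟩, hz⟩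

lemma AdjClosed.reflTransGen_compl (hA : AdjClosed τ A) (hx : x ∉ A)
    (hxy : Relation.ReflTransGen (OccAdj τ) x y) :
    Relation.ReflTransGen (VacAdj A) x y ∧ y ∉ A := by
  induction hxy with
  | refl => exact ⟨.refl, hx⟩
  | tail _ hyz ih =>
    have hz : _ ∉ A := fun hz => ih.2 (hA _ _ (symm hyz) hz)
    exact ⟨ih.1.tail ⟨hyz.1, ih.2, hz⟩, hz⟩

open scoped Classical in
noncomputable def occComponent (τ : Config) (a : ℤ × ℤ) : Config :=
  τ.filter fun x => Relation.ReflTransGen (OccAdj τ) x a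

lemma mem_occComponent {a : ℤ × ℤ} :
    x ∈ occComponent τ a ↔ x ∈ τ ∧ Relation.ReflTransGen (OccAdj τ) x a := by
  simp [occComponent]

lemma adjClosed_occComponent (a : ℤ × ℤ) : AdjClosed τ (occComponent τ a) := by
  intro x y hxy hx
  rw [mem_occComponent] at hx ⊢
  exact ⟨hxy.2.2, .head (symm hxy) hx.2⟩

lemma connectedConfig_occComponent {a : ℤ × ℤ} (ha : a ∈ τ) :
    ConnectedConfig (occComponent τ a) := by
  have ha' : a ∈ occComponent τ a := mem_occComponent.mpr ⟨ha, .refl⟩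
  have hpath : ∀ x ∈ occComponent τ a, Relation.ReflTransGen (OccAdj (occComponent τ a)) x a :=
    fun x hx => ((adjClosed_occComponent a).reflTransGen hx (mem_occComponent.mp hx).2).1
  exact ⟨⟨a, ha'⟩, fun x hx y hy => (hpath x hx).trans (symm (hpath y hy))⟩

end Components

section Erase

variable {σ : Config} {v : ℤ × ℤ}

lemma exists_occAdj_reflTransGen_erase (hconn : ConnectedConfig σ) (hv : v ∈ σ) {x : ℤ × ℤ}
    (hx : x ∈ σ.erase v) :
    ∃ s, OccAdj σ s v ∧ Relation.ReflTransGen (OccAdj (σ.erase v)) x s := by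
  suffices h : ∀ z, Relation.ReflTransGen (OccAdj σ) x z →
      (z ∈ σ.erase v ∧ Relation.ReflTransGen (OccAdj (σ.erase v)) x z) ∨
      ∃ s, OccAdj σ s v ∧ Relation.ReflTransGen (OccAdj (σ.erase v)) x s from
    (h v (hconn.2 x (mem_of_mem_erase hx) v hv)).resolve_left fun h => notMem_erase v σ h.1
  intro z hxz
  induction hxz with
  | refl => exact .inl ⟨hx, .refl⟩
  | @tail y z _ hyz ih =>
    rcases ih with ⟨hy, hxy⟩ | h
    · by_cases hzv : z = v
      · exact .inr ⟨y, hzv ▸ hyz, hxy⟩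
      · have hz := mem_erase_of_ne_of_mem hzv hyz.2.2
        exact .inl ⟨hz, hxy.tail ⟨hyz.1, hy, hz⟩⟩
    · exact .inr h

lemma connectedConfig_erase (hconn : ConnectedConfig σ) (hv : v ∈ σ) {r : ℤ × ℤ}
    (hr : r ∈ σ.erase v)
    (hnbr : ∀ s, OccAdj σ s v → Relation.ReflTransGen (OccAdj (σ.erase v)) s r) :
    ConnectedConfig (σ.erase v) := by
  have hpath : ∀ x ∈ σ.erase v, Relation.ReflTransGen (OccAdj (σ.erase v)) x r := by
    intro x hx
    obtain ⟨s, hsv, hxs⟩ := exists_occAdj_reflTransGen_erase hconn hv hx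
    exact hxs.trans (hnbr s hsv)
  exact ⟨⟨r, hr⟩, fun x hx y hy => (hpath x hx).trans (symm (hpath y hy))⟩

/-- Everything discarded is joined through vacant sites to `v`, from which the ray to the
right escapes. -/
lemma holeFree_of_adjClosed (hhole : HoleFree σ) (hconn : ConnectedConfig σ) (hv : v ∈ σ)
    (hmax : ∀ w ∈ σ, lexLe w v) {A : Config} (hAτ : A ⊆ σ.erase v)
    (hA : AdjClosed (σ.erase v) A) : HoleFree A := by
  have hAσ : A ⊆ σ := hAτ.trans (erase_subset v σ)
  have hray : ∀ k : ℕ, (v.1 + k, v.2) ∉ A := by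
    intro k hk
    rcases k.eq_zero_or_pos with rfl | hk0
    · exact notMem_erase v σ (hAτ (by simpa using hk))
    · exact notMem_of_lexLe hmax (by omega) (hAσ hk)
  intro w hw
  by_cases hwσ : w ∈ σ
  · have hreach : Relation.ReflTransGen (VacAdj A) w v := by
      by_cases hwv : w = v
      · exact hwv ▸ .refl
      obtain ⟨s, hsv, hws⟩ :=
        exists_occAdj_reflTransGen_erase hconn hv (mem_erase_of_ne_of_mem hwv hwσ)
      obtain ⟨hws', hs⟩ := hA.reflTransGen_compl hw hws
      exact hws'.tail ⟨hsv.1, hs, fun h => notMem_erase v σ (hAτ h)⟩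
    exact compComponent_infinite_of_ray hreach hray
  · exact (hhole w hwσ).mono fun z hz =>
      Relation.ReflTransGen.mono (fun _ _ h => VacAdj.anti hAσ h) _ _ hz

end Erase

section Counting

def eulerChar (σ : Config) : ℤ := σ.card - edges σ + triangles σ

lemma card_filter_union {α : Type*} [DecidableEq α] {A C : Finset α} (hAC : Disjoint A C)
    {P Q R : α → Prop} [DecidablePred P] [DecidablePred Q] [DecidablePred R]
    (hQ : ∀ x ∈ A, P x ↔ Q x) (hR : ∀ x ∈ C, P x ↔ R x) :
    #((A ∪ C).filter P) = #(A.filter Q) + #(C.filter R) := by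
  rw [filter_union, card_union_of_disjoint (disjoint_filter_filter hAC), filter_congr hQ,
    filter_congr hR]

variable {A C : Config}

lemma shift_mem_union_iff (hsep : ∀ x ∈ A, ∀ y ∈ C, ¬ TriAdj x y) {w d : ℤ × ℤ} (hw : w ∈ A)
    (hd : d ∈ triNbrs) : shift w d ∈ A ∪ C ↔ shift w d ∈ A := by
  rw [mem_union, or_iff_left fun h => hsep w hw _ h (triAdj_shift w hd)]

lemma edges_union (hAC : Disjoint A C) (hsep : ∀ x ∈ A, ∀ y ∈ C, ¬ TriAdj x y) :
    edges (A ∪ C) = edges A + edges C := by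
  have hsep' : ∀ x ∈ C, ∀ y ∈ A, ¬ TriAdj x y := fun x hx y hy h => hsep y hy x hx h.symm
  have key : ∀ d ∈ triNbrs, #((A ∪ C).filter fun w => shift w d ∈ A ∪ C) =
      #(A.filter fun w => shift w d ∈ A) + #(C.filter fun w => shift w d ∈ C) := fun d hd =>
    card_filter_union hAC (fun w hw => shift_mem_union_iff hsep hw hd)
      (fun w hw => union_comm A C ▸ shift_mem_union_iff hsep' hw hd)
  simp only [edges]
  rw [key (1, 0) (by simp [triNbrs]), key (0, 1) (by simp [triNbrs]),
    key (1, 1) (by simp [triNbrs])]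
  ring

lemma triangles_union (hAC : Disjoint A C) (hsep : ∀ x ∈ A, ∀ y ∈ C, ¬ TriAdj x y) :
    triangles (A ∪ C) = triangles A + triangles C := by
  have hsep' : ∀ x ∈ C, ∀ y ∈ A, ¬ TriAdj x y := fun x hx y hy h => hsep y hy x hx h.symm
  have key : ∀ d ∈ triNbrs,
      #((A ∪ C).filter fun w => shift w d ∈ A ∪ C ∧ shift w (1, 1) ∈ A ∪ C) =
      #(A.filter fun w => shift w d ∈ A ∧ shift w (1, 1) ∈ A) +
      #(C.filter fun w => shift w d ∈ C ∧ shift w (1, 1) ∈ C) := fun d hd =>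
    card_filter_union hAC
      (fun w hw => by
        rw [shift_mem_union_iff hsep hw hd, shift_mem_union_iff hsep hw (by simp [triNbrs])])
      (fun w hw => by
        rw [union_comm, shift_mem_union_iff hsep' hw hd,
          shift_mem_union_iff hsep' hw (by simp [triNbrs])])
  simp only [triangles]
  rw [key (1, 0) (by simp [triNbrs]), key (0, 1) (by simp [triNbrs])]
  ring

lemma eulerChar_union (hAC : Disjoint A C) (hsep : ∀ x ∈ A, ∀ y ∈ C, ¬ TriAdj x y) :
    eulerChar (A ∪ C) = eulerChar A + eulerChar C := by
  simp only [eulerChar, card_union_of_disjoint hAC, edges_union hAC hsep,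
    triangles_union hAC hsep]
  push_cast
  ring

end Counting

section Insert

variable {τ : Config} {v : ℤ × ℤ}

lemma card_filter_eq_and {α : Type*} [DecidableEq α] (s : Finset α) (b : α) (R : α → Prop)
    [DecidablePred R] : #(s.filter fun w => w = b ∧ R w) = if b ∈ s ∧ R b then 1 else 0 := by
  split_ifs with h
  · rw [card_eq_one]
    exact ⟨b, by ext w; simp only [mem_filter, mem_singleton]; grind⟩
  · rw [card_eq_zero, filter_eq_empty_iff]
    rintro w hw ⟨rfl, hR⟩
    exact h ⟨hw, hR⟩

lemma shift_left_inj {w u d : ℤ × ℤ} : shift w d = shift u d ↔ w = u := by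
  simp only [shift, Prod.ext_iff, add_left_inj]

lemma card_filter_shift_mem_insert (hv : v ∉ τ) {d u : ℤ × ℤ} (hu : shift u d = v)
    (hd : shift v d ≠ v) (hvd : shift v d ∉ τ) :
    #((insert v τ).filter fun w => shift w d ∈ insert v τ) =
      #(τ.filter fun w => shift w d ∈ τ) + if u ∈ τ then 1 else 0 := by
  have hsplit : τ.filter (fun w => shift w d ∈ insert v τ) =
      τ.filter (fun w => shift w d ∈ τ) ∪ τ.filter (fun w => w = u) := by
    rw [← filter_or]
    refine filter_congr fun w _ => ?_
    rw [mem_insert, ← hu, shift_left_inj, or_comm]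
  have hdisj : Disjoint (τ.filter fun w => shift w d ∈ τ) (τ.filter fun w => w = u) :=
    disjoint_filter.mpr fun w _ hw hwu => hv (hu ▸ hwu ▸ hw)
  rw [filter_insert, if_neg (by simp [hd, hvd]), hsplit, card_union_of_disjoint hdisj,
    filter_eq']
  split_ifs <;> simp

lemma shift_mem_insert_and_iff (hmax : ∀ w ∈ τ, lexLe w v) {w d : ℤ × ℤ}
    (hd : d = (1, 0) ∨ d = (0, 1)) :
    (shift w d ∈ insert v τ ∧ shift w (1, 1) ∈ insert v τ) ↔
      (shift w d ∈ τ ∧ shift w (1, 1) ∈ τ) ∨ (w = (v.1 - 1, v.2 - 1) ∧ shift w d ∈ τ) := by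
  constructor
  · rintro ⟨h1, h2⟩
    rw [mem_insert] at h1 h2
    rcases h2 with h2 | h2
    · refine .inr ⟨by rw [← h2]; simp [shift], h1.resolve_left fun h => ?_⟩
      rw [← h2] at h
      rcases hd with rfl | rfl <;> simp [shift] at h
    · refine .inl ⟨h1.resolve_left fun h => ?_, h2⟩
      have l2 := hmax _ h2
      rw [← h] at l2
      unfold lexLe shift at l2
      rcases hd with rfl | rfl <;> simp at l2
  · rintro (⟨h1, h2⟩ | ⟨rfl, h1⟩)
    · exact ⟨mem_insert_of_mem h1, mem_insert_of_mem h2⟩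
    · exact ⟨mem_insert_of_mem h1, mem_insert.mpr (.inl (by simp [shift]))⟩

lemma card_filter_shift_mem_and_insert (hv : v ∉ τ) (hmax : ∀ w ∈ τ, lexLe w v) {d : ℤ × ℤ}
    (hd : d = (1, 0) ∨ d = (0, 1)) :
    #((insert v τ).filter fun w => shift w d ∈ insert v τ ∧ shift w (1, 1) ∈ insert v τ) =
      #(τ.filter fun w => shift w d ∈ τ ∧ shift w (1, 1) ∈ τ) +
        if (v.1 - 1, v.2 - 1) ∈ τ ∧ shift (v.1 - 1, v.2 - 1) d ∈ τ then 1 else 0 := by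
  have hsplit : τ.filter (fun w => shift w d ∈ insert v τ ∧ shift w (1, 1) ∈ insert v τ) =
      τ.filter (fun w => shift w d ∈ τ ∧ shift w (1, 1) ∈ τ) ∪
        τ.filter (fun w => w = (v.1 - 1, v.2 - 1) ∧ shift w d ∈ τ) := by
    rw [← filter_or]
    exact filter_congr fun w _ => shift_mem_insert_and_iff hmax hd
  have hdisj : Disjoint (τ.filter fun w => shift w d ∈ τ ∧ shift w (1, 1) ∈ τ)
      (τ.filter fun w => w = (v.1 - 1, v.2 - 1) ∧ shift w d ∈ τ) := by
    refine disjoint_filter.mpr fun w _ hw ⟨hwb, _⟩ => hv ?_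
    simpa [hwb, shift] using hw.2
  have hv_out : shift v d ∉ insert v τ := by
    rw [mem_insert, not_or]
    constructor
    · rcases hd with rfl | rfl <;> simp [shift, Prod.ext_iff]
    · exact notMem_of_lexLe hmax (by rcases hd with rfl | rfl <;> simp [shift])
  rw [filter_insert, if_neg fun h => hv_out h.1, hsplit, card_union_of_disjoint hdisj,
    card_filter_eq_and]

lemma eulerChar_insert_of_lexLe (hv : v ∉ τ) (hmax : ∀ w ∈ τ, lexLe w v) :
    eulerChar (insert v τ) = eulerChar τ + 1
      - ((if (v.1 - 1, v.2) ∈ τ then 1 else 0) + (if (v.1, v.2 - 1) ∈ τ then 1 else 0)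
        + (if (v.1 - 1, v.2 - 1) ∈ τ then 1 else 0))
      + ((if (v.1 - 1, v.2 - 1) ∈ τ ∧ (v.1, v.2 - 1) ∈ τ then 1 else 0)
        + (if (v.1 - 1, v.2 - 1) ∈ τ ∧ (v.1 - 1, v.2) ∈ τ then 1 else 0)) := by
  have hout : ∀ d : ℤ × ℤ, (0 < d.1 ∨ (d.1 = 0 ∧ 0 < d.2)) → shift v d ∉ τ ∧ shift v d ≠ v :=
    fun d hd => ⟨notMem_of_lexLe hmax (by simp only [shift]; omega),
      by simp only [shift, ne_eq, Prod.ext_iff]; omega⟩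
  have e1 := card_filter_shift_mem_insert hv (u := (v.1 - 1, v.2)) (by simp [shift])
    (hout (1, 0) (by simp)).2 (hout (1, 0) (by simp)).1
  have e2 := card_filter_shift_mem_insert hv (u := (v.1, v.2 - 1)) (by simp [shift])
    (hout (0, 1) (by simp)).2 (hout (0, 1) (by simp)).1
  have e3 := card_filter_shift_mem_insert hv (u := (v.1 - 1, v.2 - 1)) (by simp [shift])
    (hout (1, 1) (by simp)).2 (hout (1, 1) (by simp)).1
  have t1 := card_filter_shift_mem_and_insert hv hmax (d := (1, 0)) (.inl rfl)
  have t2 := card_filter_shift_mem_and_insert hv hmax (d := (0, 1)) (.inr rfl)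
  rw [show shift (v.1 - 1, v.2 - 1) (1, 0) = (v.1, v.2 - 1) by simp [shift]] at t1
  rw [show shift (v.1 - 1, v.2 - 1) (0, 1) = (v.1 - 1, v.2) by simp [shift]] at t2
  simp only [eulerChar, edges, triangles, card_insert_of_notMem hv, e1, e2, e3, t1, t2]
  push_cast
  ring

end Insert

section Perimeter

lemma sum_ite_zero_one_add_card_filter {α : Type*} (s : Finset α) (P : α → Prop)
    [DecidablePred P] : ∑ x ∈ s, (if P x then 0 else 1) + #(s.filter P) = #s := by
  have h := card_filter_add_card_filter_not (s := s) P
  rw [card_filter (fun x => ¬ P x)] at h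
  simp only [ite_not] at h
  omega

lemma shift_shift_of_add {w a b c : ℤ × ℤ} (h : (a.1 + b.1, a.2 + b.2) = c) :
    shift (shift w a) b = shift w c := by
  subst h
  simp only [shift, add_assoc]

lemma card_filter_shift_mem_and_reanchor (σ : Config) (d e : ℤ × ℤ) :
    #(σ.filter fun w => shift w d ∈ σ ∧ shift w e ∈ σ) =
      #(σ.filter fun u => shift u (d.1 - e.1, d.2 - e.2) ∈ σ ∧ shift u (-e.1, -e.2) ∈ σ) := by
  refine card_nbij' (shift · e) (shift · (-e.1, -e.2)) ?_ ?_ ?_ ?_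
  · intro w hw
    simp only [coe_filter, Set.mem_ofPred_eq] at hw ⊢
    rw [shift_shift_of_add (c := d) (by simp), shift_shift_of_add (c := (0, 0)) (by simp)]
    exact ⟨hw.2.2, hw.2.1, by simpa [shift] using hw.1⟩
  · intro u hu
    simp only [coe_filter, Set.mem_ofPred_eq] at hu ⊢
    rw [shift_shift_of_add (c := (d.1 - e.1, d.2 - e.2)) (by ext <;> dsimp only <;> ring),
      shift_shift_of_add (c := (0, 0)) (by simp)]
    exact ⟨hu.2.2, hu.2.1, by simpa [shift] using hu.1⟩
  all_goals
    intro w _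
    simp [shift]

lemma perim_add_three_mul_triangles (σ : Config) :
    perim σ + 3 * triangles σ = 2 * edges σ := by
  have r1 := card_filter_shift_mem_and_reanchor σ (1, 0) (0, -1)
  have r2 := card_filter_shift_mem_and_reanchor σ (0, 1) (-1, 0)
  norm_num at r1 r2
  simp only [and_comm (a := shift _ (1, 1) ∈ σ)] at r1 r2
  have s := fun d e => sum_ite_zero_one_add_card_filter (σ.filter fun v => shift v d ∈ σ)
    (fun v => shift v e ∈ σ)
  simp only [filter_filter] at s
  have s1 := s (1, 0) (1, 1)
  have s2 := s (1, 0) (0, -1)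
  have s3 := s (0, 1) (1, 1)
  have s4 := s (0, 1) (-1, 0)
  have s5 := s (1, 1) (1, 0)
  have s6 := s (1, 1) (0, 1)
  simp only [and_comm (a := shift _ (1, 1) ∈ σ)] at s5 s6
  simp only [perim, edges, triangles, sum_add_distrib]
  omega

end Perimeter

section Euler

variable {σ : Config} {v : ℤ × ℤ}

lemma eulerChar_eq_eulerChar_erase (hv : v ∈ σ) (hmax : ∀ w ∈ σ, lexLe w v) :
    eulerChar σ = eulerChar (σ.erase v) + 1
      - ((if (v.1 - 1, v.2) ∈ σ then 1 else 0) + (if (v.1, v.2 - 1) ∈ σ then 1 else 0)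
        + (if (v.1 - 1, v.2 - 1) ∈ σ then 1 else 0))
      + ((if (v.1 - 1, v.2 - 1) ∈ σ ∧ (v.1, v.2 - 1) ∈ σ then 1 else 0)
        + (if (v.1 - 1, v.2 - 1) ∈ σ ∧ (v.1 - 1, v.2) ∈ σ then 1 else 0)) := by
  have h := eulerChar_insert_of_lexLe (notMem_erase v σ) fun w hw => hmax w (mem_of_mem_erase hw)
  have hne : ∀ p : ℤ × ℤ, p.1 < v.1 ∨ p.2 < v.2 → (p ∈ σ.erase v ↔ p ∈ σ) := fun p hp =>
    ⟨mem_of_mem_erase, mem_erase_of_ne_of_mem fun h => by rw [h] at hp; omega⟩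
  rw [insert_erase hv] at h
  simp only [hne (v.1 - 1, v.2) (by omega), hne (v.1, v.2 - 1) (by omega),
    hne (v.1 - 1, v.2 - 1) (by omega)] at h
  exact h

lemma reflTransGen_erase_corner (hmax : ∀ w ∈ σ, lexLe w v) (hb : (v.1 - 1, v.2 - 1) ∈ σ)
    {s : ℤ × ℤ} (hs : OccAdj σ s v) :
    Relation.ReflTransGen (OccAdj (σ.erase v)) s (v.1 - 1, v.2 - 1) := by
  have hs' : s ∈ σ.erase v := mem_erase_of_ne_of_mem hs.1.ne hs.2.1
  have hb' : (v.1 - 1, v.2 - 1) ∈ σ.erase v :=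
    mem_erase_of_ne_of_mem (by simp [Prod.ext_iff]) hb
  rcases eq_of_occAdj_lexMax hmax hs with rfl | rfl | rfl
  · exact .single ⟨by rw [triAdj_iff]; omega, hs', hb'⟩
  · exact .single ⟨by rw [triAdj_iff]; omega, hs', hb'⟩
  · exact .refl

lemma eulerChar_erase_of_corner_vacant (hhole : HoleFree σ) (hconn : ConnectedConfig σ)
    (hv : v ∈ σ) (hmax : ∀ w ∈ σ, lexLe w v) (ha : (v.1 - 1, v.2) ∈ σ)
    (hc : (v.1, v.2 - 1) ∈ σ) (hb : (v.1 - 1, v.2 - 1) ∉ σ)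
    (hpiece : ∀ A ⊆ σ.erase v, AdjClosed (σ.erase v) A → ConnectedConfig A → eulerChar A = 1) :
    eulerChar (σ.erase v) = 2 := by
  have ha' : (v.1 - 1, v.2) ∈ σ.erase v := mem_erase_of_ne_of_mem (by simp [Prod.ext_iff]) ha
  have hc' : (v.1, v.2 - 1) ∈ σ.erase v := mem_erase_of_ne_of_mem (by simp [Prod.ext_iff]) hc
  set A := occComponent (σ.erase v) (v.1 - 1, v.2)
  set C := occComponent (σ.erase v) (v.1, v.2 - 1)
  have hcover : σ.erase v = A ∪ C := by
    ext x
    simp only [A, C, mem_union, mem_occComponent]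
    refine ⟨fun hx => ?_, fun h => h.elim And.left And.left⟩
    obtain ⟨s, hsv, hxs⟩ := exists_occAdj_reflTransGen_erase hconn hv hx
    rcases eq_of_occAdj_lexMax hmax hsv with rfl | rfl | rfl
    · exact .inl ⟨hx, hxs⟩
    · exact .inr ⟨hx, hxs⟩
    · exact absurd hsv.2.1 hb
  have hdisj : Disjoint A C := disjoint_left.mpr fun x hxA hxC =>
    not_reflTransGen_erase_of_corner_vacant hhole hv hmax ha hc hb
      ((symm (mem_occComponent.mp hxA).2).trans (mem_occComponent.mp hxC).2)
  have hsep : ∀ x ∈ A, ∀ y ∈ C, ¬ TriAdj x y := fun x hx y hy hxy =>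
    disjoint_left.mp hdisj (adjClosed_occComponent _ x y
      ⟨hxy, (mem_occComponent.mp hx).1, (mem_occComponent.mp hy).1⟩ hx) hy
  rw [hcover, eulerChar_union hdisj hsep,
    hpiece A (hcover ▸ subset_union_left) (adjClosed_occComponent _)
      (connectedConfig_occComponent ha'),
    hpiece C (hcover ▸ subset_union_right) (adjClosed_occComponent _)
      (connectedConfig_occComponent hc')]
  norm_num

lemma eulerChar_eq_one_of_erase (hhole : HoleFree σ) (hconn : ConnectedConfig σ) (hv : v ∈ σ)
    (hmax : ∀ w ∈ σ, lexLe w v)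
    (hpiece : ∀ A ⊆ σ.erase v, AdjClosed (σ.erase v) A → ConnectedConfig A → eulerChar A = 1) :
    eulerChar σ = 1 := by
  have hconn_erase : ∀ r ∈ σ.erase v,
      (∀ s, OccAdj σ s v → Relation.ReflTransGen (OccAdj (σ.erase v)) s r) →
      eulerChar (σ.erase v) = 1 := fun r hr h =>
    hpiece _ subset_rfl (fun _ _ h _ => h.2.2) (connectedConfig_erase hconn hv hr h)
  have hstep := eulerChar_eq_eulerChar_erase hv hmax
  by_cases hb : (v.1 - 1, v.2 - 1) ∈ σ
  · rw [hconn_erase _ (mem_erase_of_ne_of_mem (by simp [Prod.ext_iff]) hb)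
      fun s hs => reflTransGen_erase_corner hmax hb hs] at hstep
    simp only [hb, true_and, if_true] at hstep
    split_ifs at hstep <;> omega
  simp only [hb, false_and, if_false] at hstep
  by_cases ha : (v.1 - 1, v.2) ∈ σ <;> by_cases hc : (v.1, v.2 - 1) ∈ σ
  · rw [eulerChar_erase_of_corner_vacant hhole hconn hv hmax ha hc hb hpiece] at hstep
    simp only [ha, hc, if_true] at hstep
    omega
  · rw [hconn_erase _ (mem_erase_of_ne_of_mem (by simp [Prod.ext_iff]) ha) fun s hs => by
      rcases eq_of_occAdj_lexMax hmax hs with rfl | rfl | rfl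
      exacts [.refl, absurd hs.2.1 hc, absurd hs.2.1 hb]] at hstep
    simp only [ha, hc, if_true, if_false] at hstep
    omega
  · rw [hconn_erase _ (mem_erase_of_ne_of_mem (by simp [Prod.ext_iff]) hc) fun s hs => by
      rcases eq_of_occAdj_lexMax hmax hs with rfl | rfl | rfl
      exacts [absurd hs.2.1 ha, .refl, absurd hs.2.1 hb]] at hstep
    simp only [ha, hc, if_true, if_false] at hstep
    omega
  · have hempty : σ.erase v = ∅ := eq_empty_of_forall_notMem fun x hx => by
      obtain ⟨s, hs, -⟩ := exists_occAdj_reflTransGen_erase hconn hv hx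
      rcases eq_of_occAdj_lexMax hmax hs with rfl | rfl | rfl
      exacts [ha hs.2.1, hc hs.2.1, hb hs.2.1]
    simp only [hempty, ha, hc, if_false] at hstep
    simpa [eulerChar, edges, triangles] using hstep

theorem eulerChar_eq_one (hconn : ConnectedConfig σ) (hhole : HoleFree σ) :
    eulerChar σ = 1 := by
  induction σ using Finset.strongInduction with
  | H σ ih =>
  obtain ⟨v, hv, hmax⟩ := exists_lexLe_of_nonempty hconn.1
  exact eulerChar_eq_one_of_erase hhole hconn hv hmax fun A hA hAcl hAconn =>
    ih A (hA.trans_ssubset (erase_ssubset hv)) hAconn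
      (holeFree_of_adjClosed hhole hconn hv hmax hA hAcl)

end Euler

/-- for a connected hole-free configuration σ of n particles,
e(σ) = 3n − p(σ) − 3. -/
theorem edges_eq_perimeter (σ : Config) (n : ℕ) (hcard : σ.card = n)
    (hconn : ConnectedConfig σ) (hhole : HoleFree σ) :
    (edges σ : ℤ) = 3 * n - perim σ - 3 := by
  have heuler := eulerChar_eq_one hconn hhole
  have hperim := perim_add_three_mul_triangles σ
  rw [eulerChar, hcard] at heuler
  omega
end

section
/- For every integer n ≥ 1, the number of connected hole-free configurations of n particles on the triangular lattice with perimeter exactly 2n − 2 is at least 2^(n−1). -/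
open Finset

/-!
Read the `n` particles as the graph `{(k, h k) : k < n}` of a lattice path whose steps are
`(1, 0)` or `(1, 1)`. Such a configuration meets every vertical line at most once, so it is
hole-free (from any vacant site a vertical ray escapes) and it has no vertical edge, hence no
triangle: each of its `n - 1` edges is traversed twice by the boundary walk, giving perimeter
`2n - 2`. The `2 ^ (n - 1)` step sequences give distinct configurations, all normalized when the
path starts at the origin; finiteness of the counted set comes from the fact that a connected
configuration of `n` particles through the origin lies in the box `[-n, n]²`.
-/

namespace TriLattice

open Relation

lemma TriAdj.symm {v w : ℤ × ℤ} (h : TriAdj v w) : TriAdj w v := by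
  simp only [TriAdj, triNbrs, List.mem_cons, Prod.mk.injEq, List.not_mem_nil, or_false] at *
  omega

lemma TriAdj.abs_sub_le {v w : ℤ × ℤ} (h : TriAdj v w) :
    |w.1 - v.1| ≤ 1 ∧ |w.2 - v.2| ≤ 1 := by
  simp only [TriAdj, triNbrs, List.mem_cons, Prod.mk.injEq, List.not_mem_nil, or_false] at h
  constructor <;> rw [abs_le] <;> omega

lemma connectedConfig_image_range {n : ℕ} (hn : 0 < n) (f : ℕ → ℤ × ℤ)
    (hf : ∀ k, k + 1 < n → TriAdj (f k) (f (k + 1))) :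
    ConnectedConfig ((range n).image f) := by
  set σ := (range n).image f
  have hmem : ∀ k < n, f k ∈ σ := fun k hk => mem_image_of_mem f (mem_range.2 hk)
  have hreach :
      ∀ k < n, ReflTransGen (fun a b => TriAdj a b ∧ a ∈ σ ∧ b ∈ σ) (f 0) (f k) := by
    intro k
    induction k with
    | zero => exact fun _ => .refl
    | succ k ih => exact fun hk => (ih (by omega)).tail ⟨hf k hk, hmem k (by omega), hmem _ hk⟩
  refine ⟨⟨f 0, hmem 0 hn⟩, ?_⟩
  simp only [σ, forall_mem_image, mem_range]
  intro j hj k hk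
  have : Std.Symm fun a b => TriAdj a b ∧ a ∈ σ ∧ b ∈ σ :=
    ⟨fun _ _ h => ⟨TriAdj.symm h.1, h.2.2, h.2.1⟩⟩
  exact (symm_of (ReflTransGen _) (hreach j hj)).trans (hreach k hk)

/-- Discrete intermediate value theorem along a path of occupied sites. -/
lemma uIcc_subset_image_of_reflTransGen {σ : Config} {p : ℤ × ℤ → ℤ}
    (hp : ∀ a b, TriAdj a b → |p b - p a| ≤ 1) {v w : ℤ × ℤ} (hv : v ∈ σ)
    (h : ReflTransGen (fun a b => TriAdj a b ∧ a ∈ σ ∧ b ∈ σ) v w) :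
    uIcc (p v) (p w) ⊆ σ.image p := by
  induction h with
  | refl => simpa using mem_image_of_mem p hv
  | @tail b c _ hbc ih =>
    refine uIcc_subset_uIcc_union_uIcc.trans (union_subset ih fun t ht => ?_)
    have := abs_le.1 (hp _ _ hbc.1)
    rw [mem_uIcc] at ht
    rcases (by omega : t = p b ∨ t = p c) with rfl | rfl
    · exact mem_image_of_mem p hbc.2.1
    · exact mem_image_of_mem p hbc.2.2

lemma natAbs_sub_lt_card {σ : Config} (hσ : ConnectedConfig σ) {v w : ℤ × ℤ}
    (hv : v ∈ σ) (hw : w ∈ σ) :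
    (w.1 - v.1).natAbs < σ.card ∧ (w.2 - v.2).natAbs < σ.card := by
  have key (p : ℤ × ℤ → ℤ) (hp : ∀ a b, TriAdj a b → |p b - p a| ≤ 1) :
      (p w - p v).natAbs < σ.card :=
    calc (p w - p v).natAbs < (uIcc (p v) (p w)).card := by rw [Int.card_uIcc]; omega
      _ ≤ (σ.image p).card :=
        card_le_card (uIcc_subset_image_of_reflTransGen hp hv (hσ.2 v hv w hw))
      _ ≤ σ.card := card_image_le
  exact ⟨key Prod.fst fun _ _ h => (TriAdj.abs_sub_le h).1,
    key Prod.snd fun _ _ h => (TriAdj.abs_sub_le h).2⟩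

lemma finite_setOf_connectedConfig (n : ℕ) :
    {σ : Config | σ.card ≤ n ∧ ConnectedConfig σ ∧ (0, 0) ∈ σ}.Finite := by
  refine (Icc ((-n : ℤ), (-n : ℤ)) (n, n)).powerset.finite_toSet.subset ?_
  rintro σ ⟨hcard, hσ, h0⟩
  rw [mem_coe, mem_powerset]
  intro v hv
  have := natAbs_sub_lt_card hσ h0 hv
  simp only [mem_Icc, Prod.le_def]
  omega

lemma ray_subset_compComponent {σ : Config} {v d : ℤ × ℤ} (hd : d ∈ triNbrs)
    (h : ∀ t : ℕ, v + (t : ℤ) • d ∉ σ) (t : ℕ) :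
    v + (t : ℤ) • d ∈ compComponent σ v := by
  induction t with
  | zero => simpa [compComponent] using ReflTransGen.refl
  | succ t ih =>
    refine ih.tail ⟨?_, h t, h (t + 1)⟩
    show (_, _) ∈ triNbrs
    simpa [add_smul, add_sub_cancel_left] using hd

lemma infinite_compComponent_of_ray {σ : Config} {v d : ℤ × ℤ} (hd : d ∈ triNbrs)
    (h : ∀ t : ℕ, v + (t : ℤ) • d ∉ σ) : (compComponent σ v).Infinite := by
  have hd0 : d ≠ 0 := by rintro rfl; simp [triNbrs, Prod.ext_iff] at hd
  exact Set.infinite_of_injective_forall_mem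
    ((add_right_injective v).comp ((smul_left_injective ℤ hd0).comp Nat.cast_injective))
    (ray_subset_compComponent hd h)

lemma holeFree_of_injOn_fst {σ : Config} (hσ : Set.InjOn Prod.fst (σ : Set (ℤ × ℤ))) :
    HoleFree σ := by
  intro v hv
  by_cases hbelow : ∃ w ∈ σ, w.1 = v.1 ∧ w.2 < v.2
  · obtain ⟨w, hw, h1, h2⟩ := hbelow
    refine infinite_compComponent_of_ray (d := (0, 1)) (by simp [triNbrs]) fun t ht => ?_
    have := congrArg Prod.snd (hσ ht hw (by simp [h1]))
    simp only [Prod.snd_add, Prod.smul_mk, smul_eq_mul, mul_one] at this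
    omega
  · push Not at hbelow
    refine infinite_compComponent_of_ray (d := (0, -1)) (by simp [triNbrs]) fun t ht => ?_
    have := hbelow _ ht (by simp)
    rcases t with _ | t
    · simp_all
    · simp only [Prod.snd_add, Prod.smul_mk, smul_eq_mul, mul_neg, mul_one] at this
      omega

lemma shift_notMem_of_injOn_fst {σ : Config} (hσ : Set.InjOn Prod.fst (σ : Set (ℤ × ℤ)))
    {v : ℤ × ℤ} (hv : v ∈ σ) : shift v (0, 1) ∉ σ := fun hv' => by
  simpa [shift] using congrArg Prod.snd (hσ hv' hv (by simp [shift]))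

lemma perim_eq_two_mul_edges {σ : Config} (hσ : ∀ v ∈ σ, shift v (0, 1) ∉ σ) :
    perim σ = 2 * edges σ := by
  have hvert : σ.filter (fun v => shift v (0, 1) ∈ σ) = ∅ := filter_eq_empty_iff.2 hσ
  have hflat : ∀ v ∈ σ.filter (fun v => shift v (1, 0) ∈ σ),
      (if shift v (1, 1) ∈ σ then 0 else 1) + (if shift v (0, -1) ∈ σ then 0 else 1) = 2 := by
    intro v hv
    rw [mem_filter] at hv
    have h1 : shift v (1, 1) ∉ σ := by simpa [shift, add_assoc] using hσ _ hv.2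
    have h2 : shift v (0, -1) ∉ σ := fun h => hσ _ h (by simpa [shift] using hv.1)
    simp [h1, h2]
  have hdiag : ∀ v ∈ σ.filter (fun v => shift v (1, 1) ∈ σ),
      (if shift v (1, 0) ∈ σ then 0 else 1) + (if shift v (0, 1) ∈ σ then 0 else 1) = 2 := by
    intro v hv
    rw [mem_filter] at hv
    have h1 : shift v (1, 0) ∉ σ := fun h => hσ _ h (by simpa [shift, add_assoc] using hv.2)
    simp [h1, hσ v hv.1]
  rw [perim, edges, hvert, sum_congr rfl hflat, sum_congr rfl hdiag, sum_empty, card_empty,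
    sum_const, sum_const, smul_eq_mul, smul_eq_mul]
  ring

def graphConfig (n : ℕ) (h : ℕ → ℤ) : Config :=
  (range n).image fun k : ℕ => ((k : ℤ), h k)

section graphConfig

variable {n : ℕ} {h : ℕ → ℤ}

lemma mk_mem_graphConfig {k : ℕ} {y : ℤ} :
    ((k : ℤ), y) ∈ graphConfig n h ↔ k < n ∧ h k = y := by
  simp [graphConfig]

lemma card_graphConfig : (graphConfig n h).card = n := by
  rw [graphConfig, card_image_of_injective _ fun a b hab => by simpa using congrArg Prod.fst hab,
    card_range]

lemma card_filter_graphConfig (p : ℤ × ℤ → Prop) [DecidablePred p] :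
    ((graphConfig n h).filter p).card =
      ((range n).filter fun k : ℕ => p ((k : ℤ), h k)).card := by
  rw [graphConfig, filter_image, card_image_of_injective _ fun a b hab => by
    simpa using congrArg Prod.fst hab]

lemma injOn_fst_graphConfig : Set.InjOn Prod.fst (graphConfig n h : Set (ℤ × ℤ)) := by
  simp only [graphConfig, coe_image, Set.InjOn, Set.forall_mem_image]
  intro a _ b _ hab
  simp_all

lemma shift_mem_graphConfig (k : ℕ) (d : ℤ) :
    shift ((k : ℤ), h k) (1, d) ∈ graphConfig n h ↔ k + 1 < n ∧ h (k + 1) = h k + d := by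
  rw [show shift ((k : ℤ), h k) (1, d) = (((k + 1 : ℕ) : ℤ), h k + d) by simp [shift],
    mk_mem_graphConfig]

lemma normalized_graphConfig (hn : 0 < n) (h0 : h 0 = 0) : Normalized (graphConfig n h) := by
  refine ⟨by simpa [h0] using (mk_mem_graphConfig (h := h) (k := 0)).2 ⟨hn, h0⟩, ?_⟩
  simp only [graphConfig, forall_mem_image, mem_range, lexLe]
  intro k _
  rcases k.eq_zero_or_pos with rfl | hk
  · simp [h0]
  · exact Or.inl (by exact_mod_cast hk)

lemma apply_eq_of_graphConfig_eq {h' : ℕ → ℤ} (he : graphConfig n h = graphConfig n h')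
    {k : ℕ} (hk : k < n) : h k = h' k :=
  ((mk_mem_graphConfig.1 (he ▸ mk_mem_graphConfig.2 ⟨hk, rfl⟩)).2).symm

variable (hstep : ∀ k, h k ≤ h (k + 1) ∧ h (k + 1) ≤ h k + 1)
include hstep

lemma connectedConfig_graphConfig (hn : 0 < n) : ConnectedConfig (graphConfig n h) := by
  refine connectedConfig_image_range hn _ fun k _ => ?_
  have := hstep k
  simp only [TriAdj, triNbrs, List.mem_cons, Prod.mk.injEq, List.not_mem_nil, or_false]
  push_cast
  omega

lemma edges_graphConfig : edges (graphConfig n h) = n - 1 := by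
  have hcard (d : ℤ) : ((graphConfig n h).filter fun v => shift v (1, d) ∈ graphConfig n h).card
      = ((range (n - 1)).filter fun k => h (k + 1) = h k + d).card := by
    rw [card_filter_graphConfig]
    refine congrArg card (ext fun k => ?_)
    simp only [mem_filter, mem_range, shift_mem_graphConfig]
    omega
  have hvert : (graphConfig n h).filter (fun v => shift v (0, 1) ∈ graphConfig n h) = ∅ :=
    filter_eq_empty_iff.2 fun _ => shift_notMem_of_injOn_fst injOn_fst_graphConfig
  have hup : (range (n - 1)).filter (fun k => h (k + 1) = h k + 1)
      = (range (n - 1)).filter (fun k => ¬h (k + 1) = h k + 0) := by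
    refine filter_congr fun k _ => ?_
    have := hstep k
    omega
  rw [edges, hcard 0, hcard 1, hvert, card_empty, add_zero, hup,
    card_filter_add_card_filter_not, card_range]

lemma perim_graphConfig : perim (graphConfig n h) = 2 * n - 2 := by
  rw [perim_eq_two_mul_edges fun _ => shift_notMem_of_injOn_fst injOn_fst_graphConfig,
    edges_graphConfig hstep]
  omega

end graphConfig

def height (b : ℕ → Bool) (k : ℕ) : ℤ := ∑ i ∈ range k, ((b i).toNat : ℤ)

lemma height_zero (b : ℕ → Bool) : height b 0 = 0 := sum_range_zero _

lemma height_succ (b : ℕ → Bool) (k : ℕ) : height b (k + 1) = height b k + (b k).toNat :=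
  sum_range_succ _ _

lemma height_step (b : ℕ → Bool) (k : ℕ) :
    height b k ≤ height b (k + 1) ∧ height b (k + 1) ≤ height b k + 1 := by
  rw [height_succ]
  cases b k <;> simp

lemma eq_of_graphConfig_height_eq {n : ℕ} {b b' : ℕ → Bool}
    (he : graphConfig n (height b) = graphConfig n (height b')) {k : ℕ} (hk : k + 1 < n) :
    b k = b' k := by
  have hsucc := apply_eq_of_graphConfig_eq he hk
  rw [height_succ, height_succ, apply_eq_of_graphConfig_eq he (by omega : k < n),
    add_right_inj] at hsucc
  revert hsucc
  cases b k <;> cases b' k <;> simp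

end TriLattice

open TriLattice

/-- for every n ≥ 1, the number of connected hole-free
configurations of n particles with perimeter exactly 2n − 2, counted up to
translation (i.e., normalized), is at least 2^(n−1). -/
theorem count_max_perimeter_configs (n : ℕ) (hn : 1 ≤ n) :
    2 ^ (n - 1) ≤
      {σ : Config | σ.card = n ∧ ConnectedConfig σ ∧ HoleFree σ ∧ Normalized σ ∧
        perim σ = 2 * n - 2}.ncard := by
  set S := {σ : Config | σ.card = n ∧ ConnectedConfig σ ∧ HoleFree σ ∧ Normalized σ ∧
    perim σ = 2 * n - 2}
  have hfin : S.Finite :=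
    (finite_setOf_connectedConfig n).subset fun _ hσ => ⟨hσ.1.le, hσ.2.1, hσ.2.2.2.1.1⟩
  let path (b : Fin (n - 1) → Bool) : Config :=
    graphConfig n (height (Function.extend Fin.val b fun _ => false))
  have hpath (b : Fin (n - 1) → Bool) : path b ∈ S :=
    ⟨card_graphConfig, connectedConfig_graphConfig (height_step _) hn,
      holeFree_of_injOn_fst injOn_fst_graphConfig, normalized_graphConfig hn (height_zero _),
      perim_graphConfig (height_step _)⟩
  have hinj : Set.InjOn path Set.univ := fun b _ b' _ he => funext fun i => by
    simpa only [Fin.val_injective.extend_apply] using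
      eq_of_graphConfig_height_eq he (k := i) (by omega)
  calc 2 ^ (n - 1) = (Set.univ : Set (Fin (n - 1) → Bool)).ncard := by simp [Set.ncard_univ]
    _ ≤ S.ncard := Set.ncard_le_ncard_of_injOn path (fun b _ => hpath b) hinj hfin
end

section
/- Suppose the number of connected hole-free n-particle configurations of perimeter k is at most f(k)·ν^k for subexponential f, ν = 2+√2, and Z ≥ (√2/λ)^{p_max} where p_max = 2n−2. Fix 0 < β < 1 and let 0 < λ < ν^{(β − (log_ν 2)/2)/(β−1)}. Then under π(σ) ∝ λ^{−p(σ)}, the probability that p(σ) ≤ β·p_max is at most f′(n)·ν^{−c₃√n} for the constant c₃ = log_ν λ − 1 − (log_ν λ)/β + (log_ν 2)/(2β) > 0 and some subexponential f′. -/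
open Finset

noncomputable def Fsum (f : ℕ → ℝ) (n : ℕ) : ℝ := ∑ k ∈ Finset.range (2*n+1), max (f k) 0

lemma Fsum_nonneg (f : ℕ → ℝ) (n : ℕ) : 0 ≤ Fsum f n :=
  Finset.sum_nonneg fun k _ => le_max_right _ _

lemma le_Fsum (f : ℕ → ℝ) {n k : ℕ} (hk : k ≤ 2*n) : f k ≤ Fsum f n :=
  le_trans (le_max_left _ _) (Finset.single_le_sum (f := fun k => max (f k) 0)
    (fun i _ => le_max_right _ _) (Finset.mem_range.mpr (Nat.lt_succ_of_le hk)))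

lemma Fsum_subexp {f : ℕ → ℝ} (hf : Subexp f) :
    ∀ c : ℝ, 1 < c → ∀ᶠ n : ℕ in Filter.atTop, (2*(n:ℝ)+1) * Fsum f n ≤ c ^ n := by
  intro c hc
  set d : ℝ := Real.sqrt ((c+1)/2) with hd
  have hd0 : (0:ℝ) ≤ (c+1)/2 := by linarith
  have hdsq : d^2 = (c+1)/2 := Real.sq_sqrt hd0
  have hd1 : 1 < d := by
    rw [hd]
    exact (Real.lt_sqrt (by norm_num)).mpr (by nlinarith)
  have hd2c : d^2 < c := by rw [hdsq]; linarith
  obtain ⟨K, hK⟩ := Filter.eventually_atTop.mp (hf d hd1)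
  set C : ℝ := ∑ j ∈ Finset.range K, max (f j) 0 with hC
  have hC0 : 0 ≤ C := Finset.sum_nonneg fun k _ => le_max_right _ _
  have hkey : ∀ k : ℕ, max (f k) 0 ≤ C + d^k := by
    intro k
    have hdk : (0:ℝ) < d^k := pow_pos (by linarith) k
    rcases le_or_gt K k with h | h
    · have := hK k h
      calc max (f k) 0 ≤ d^k := max_le this (le_of_lt hdk)
        _ ≤ C + d^k := by linarith
    · have h1 : max (f k) 0 ≤ C :=
        Finset.single_le_sum (f := fun j => max (f j) 0)
          (fun i _ => le_max_right _ _) (Finset.mem_range.mpr h)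
      linarith
  -- F n ≤ (2n+1)(C+1) d^(2n)
  have hF : ∀ n : ℕ, Fsum f n ≤ (2*(n:ℝ)+1) * (C+1) * (d^2)^n := by
    intro n
    have hd1n : (1:ℝ) ≤ d ^ (2*n) := one_le_pow₀ (le_of_lt hd1)
    calc Fsum f n ≤ ∑ k ∈ Finset.range (2*n+1), (C + d^k) :=
          Finset.sum_le_sum fun k _ => hkey k
      _ ≤ ∑ k ∈ Finset.range (2*n+1), (C + d^(2*n)) := by
          refine Finset.sum_le_sum fun k hk => ?_
          have : d^k ≤ d^(2*n) :=
            pow_le_pow_right₀ (le_of_lt hd1) (Nat.lt_succ_iff.mp (Finset.mem_range.mp hk))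
          linarith
      _ = (2*(n:ℝ)+1) * (C + d^(2*n)) := by
          rw [Finset.sum_const, Finset.card_range, nsmul_eq_mul]; push_cast; ring
      _ ≤ (2*(n:ℝ)+1) * (C+1) * (d^2)^n := by
          rw [← pow_mul]
          have h1 : C + d^(2*n) ≤ (C+1) * d^(2*n) := by nlinarith
          have h2 : (0:ℝ) ≤ 2*(n:ℝ)+1 := by positivity
          nlinarith
  -- eventual bound
  set r : ℝ := d^2 / c with hr
  have hr0 : 0 ≤ r := by positivity
  have hr1 : r < 1 := by rw [hr, div_lt_one (by linarith)]; exact hd2c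
  have hten := tendsto_pow_const_mul_const_pow_of_lt_one 2 hr0 hr1
  have hpos : (0:ℝ) < (9 * (C+1))⁻¹ := by positivity
  have hev := hten.eventually_lt_const hpos
  filter_upwards [hev, Filter.eventually_ge_atTop 1] with n h1 h2
  have hn1 : (1:ℝ) ≤ (n:ℝ) := by exact_mod_cast h2
  have hcn : (0:ℝ) < c^n := pow_pos (by linarith) n
  have hrn : (0:ℝ) ≤ r^n := pow_nonneg hr0 n
  have hd2n : (d^2)^n = r^n * c^n := by
    rw [hr, div_pow, div_mul_cancel₀]
    exact ne_of_gt hcn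
  have key : (2*(n:ℝ)+1) * (2*(n:ℝ)+1) * (C+1) * r^n ≤ 1 := by
    have hsq : (2*(n:ℝ)+1) * (2*(n:ℝ)+1) ≤ 9 * (n:ℝ)^2 := by nlinarith
    have h1' : 9 * (C+1) * ((n:ℝ)^2 * r^n) < 9 * (C+1) * (9*(C+1))⁻¹ := by
      apply mul_lt_mul_of_pos_left h1 (by positivity)
    rw [mul_inv_cancel₀ (by positivity)] at h1'
    nlinarith [mul_nonneg (mul_nonneg (by linarith : (0:ℝ) ≤ 9*(n:ℝ)^2 - (2*(n:ℝ)+1)*(2*(n:ℝ)+1)) (by linarith : (0:ℝ) ≤ C+1)) hrn]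
  calc (2*(n:ℝ)+1) * Fsum f n ≤ (2*(n:ℝ)+1) * ((2*(n:ℝ)+1) * (C+1) * (d^2)^n) := by
        have := hF n
        have h2' : (0:ℝ) ≤ 2*(n:ℝ)+1 := by positivity
        exact mul_le_mul_of_nonneg_left this h2'
    _ = ((2*(n:ℝ)+1) * (2*(n:ℝ)+1) * (C+1) * r^n) * c^n := by rw [hd2n]; ring
    _ ≤ 1 * c^n := mul_le_mul_of_nonneg_right key (le_of_lt hcn)
    _ = c^n := one_mul _

set_option maxHeartbeats 1000000 in
open scoped Classical in
/-- Peierls argument for expansion: suppose the number of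
connected hole-free n-particle configurations of perimeter k is at most f(k)·ν^k
for subexponential f, ν = 2 + √2, every perimeter lies in [√n, 2n−2], and
Z ≥ (√2/λ)^{p_max} with p_max = 2n − 2.  Fix 0 < β < 1 and
0 < λ < ν^{(β − (log_ν 2)/2)/(β−1)}.  Then
c₃ = log_ν λ − 1 − (log_ν λ)/β + (log_ν 2)/(2β) > 0 and, under π(σ) ∝ λ^{−p(σ)},
the probability that p(σ) ≤ β·p_max is at most f′(n)·ν^{−c₃√n} for some
subexponential f′. -/
theorem expansion_peierls (f : ℕ → ℝ) (hf : Subexp f) (β lam : ℝ)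
    (hβ0 : 0 < β) (hβ1 : β < 1) (hlam0 : 0 < lam)
    (hlam : lam < (2 + Real.sqrt 2) ^
      ((β - Real.logb (2 + Real.sqrt 2) 2 / 2) / (β - 1))) :
    0 < Real.logb (2 + Real.sqrt 2) lam - 1
          - Real.logb (2 + Real.sqrt 2) lam / β
          + Real.logb (2 + Real.sqrt 2) 2 / (2 * β) ∧
    ∃ f' : ℕ → ℝ, Subexp f' ∧
      ∀ n : ℕ, 1 ≤ n → ∀ S : Finset Config,
        (∀ σ : Config, σ ∈ S ↔
          (σ.card = n ∧ ConnectedConfig σ ∧ HoleFree σ ∧ Normalized σ)) →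
        (∀ σ ∈ S, Real.sqrt n ≤ (perim σ : ℝ) ∧ perim σ ≤ 2 * n - 2) →
        (∀ k : ℕ, ((S.filter (fun σ => perim σ = k)).card : ℝ)
            ≤ f k * (2 + Real.sqrt 2) ^ k) →
        (Real.sqrt 2 / lam) ^ (2 * n - 2) ≤ (∑ σ ∈ S, (lam ^ perim σ)⁻¹) →
        (∑ σ ∈ S.filter (fun σ => (perim σ : ℝ) ≤ β * (2 * n - 2)), (lam ^ perim σ)⁻¹)
            / (∑ σ ∈ S, (lam ^ perim σ)⁻¹)
          ≤ f' n * (2 + Real.sqrt 2) ^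
              (-((Real.logb (2 + Real.sqrt 2) lam - 1
                  - Real.logb (2 + Real.sqrt 2) lam / β
                  + Real.logb (2 + Real.sqrt 2) 2 / (2 * β)) * Real.sqrt n)) := by
  classical
  have h2 : (0:ℝ) < Real.sqrt 2 := Real.sqrt_pos.mpr (by norm_num)
  set ν : ℝ := 2 + Real.sqrt 2 with hνdef
  have hν1 : 1 < ν := by rw [hνdef]; nlinarith
  have hν0 : (0:ℝ) < ν := by linarith
  have hνne : ν ≠ 1 := ne_of_gt hν1
  set A : ℝ := Real.logb ν 2 with hA
  set L : ℝ := Real.logb ν lam with hL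
  have hβne : β ≠ 0 := ne_of_gt hβ0
  have hβ1' : β - 1 < 0 := by linarith
  have hLE : L < (β - A/2)/(β-1) := by
    have h := Real.logb_lt_logb (b := ν) hν1 hlam0 hlam
    rwa [Real.logb_rpow hν0 hνne] at h
  have hLβ : β - A/2 < L * (β-1) := (lt_div_iff_of_neg hβ1').mp hLE
  have hA1 : A < 1 := by
    rw [hA]
    calc Real.logb ν 2 < Real.logb ν ν := Real.logb_lt_logb hν1 (by norm_num) (by nlinarith)
      _ = 1 := Real.logb_self_eq_one hν1
  have hL1 : L < 1 := by nlinarith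
  set c₃ : ℝ := L - 1 - L / β + A / (2 * β) with hc₃def
  have hbc : β * c₃ = L*(β-1) - (β - A/2) := by rw [hc₃def]; field_simp; ring
  have hc3pos : 0 < c₃ := by
    have h1 : 0 < β * c₃ := by rw [hbc]; linarith
    nlinarith
  refine ⟨hc3pos, ?_⟩
  have hlamv : ν ^ L = lam := by rw [hL]; exact Real.rpow_logb hν0 hνne hlam0
  refine ⟨fun n => (2*(n:ℝ)+1) * Fsum f n *
      ν ^ (c₃ * Real.sqrt n - β * c₃ * (2*(n:ℝ)-2)), ?_, ?_⟩
  · -- Subexp f'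
    intro c hc
    have hgrow : ∀ᶠ n : ℕ in Filter.atTop, Real.sqrt n ≤ β * (2*(n:ℝ)-2) := by
      rw [Filter.eventually_atTop]
      refine ⟨max 2 ⌈(2/β)^2⌉₊, fun n hn => ?_⟩
      have hn2 : 2 ≤ n := le_trans (le_max_left _ _) hn
      have hnc : ((2/β)^2 : ℝ) ≤ n := by
        have h' := le_trans (le_max_right _ _) hn
        calc ((2/β)^2:ℝ) ≤ (⌈(2/β)^2⌉₊ : ℝ) := Nat.le_ceil _
          _ ≤ n := by exact_mod_cast h'
      have hs : Real.sqrt n * Real.sqrt n = n := Real.mul_self_sqrt (by positivity)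
      have h2b : 2/β ≤ Real.sqrt n := (Real.le_sqrt (by positivity) (by positivity)).mpr hnc
      have hb2 : 2 ≤ Real.sqrt n * β := (div_le_iff₀ hβ0).mp h2b
      have hn2' : (2:ℝ) ≤ n := by exact_mod_cast hn2
      nlinarith [mul_le_mul_of_nonneg_left hb2 (Real.sqrt_nonneg n)]
    filter_upwards [Fsum_subexp hf c hc, hgrow] with n h1 hg
    have hw : ν ^ (c₃ * Real.sqrt n - β * c₃ * (2*(n:ℝ)-2)) ≤ 1 := by
      apply Real.rpow_le_one_of_one_le_of_nonpos (le_of_lt hν1)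
      nlinarith [mul_le_mul_of_nonneg_left hg (le_of_lt hc3pos)]
    have hFn : 0 ≤ (2*(n:ℝ)+1) * Fsum f n := by
      have := Fsum_nonneg f n; positivity
    calc (2*(n:ℝ)+1) * Fsum f n * ν ^ (c₃ * Real.sqrt n - β * c₃ * (2*(n:ℝ)-2))
        ≤ (2*(n:ℝ)+1) * Fsum f n * 1 := mul_le_mul_of_nonneg_left hw hFn
      _ = (2*(n:ℝ)+1) * Fsum f n := mul_one _
      _ ≤ c ^ n := h1
  · -- main bound
    intro n hn S _hS hperim hcount hZ
    set m : ℕ := 2*n - 2 with hm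
    have h2n : 2 ≤ 2*n := by omega
    have hmcast : (m:ℝ) = 2*(n:ℝ) - 2 := by rw [hm, Nat.cast_sub h2n]; push_cast; ring
    set Z : ℝ := ∑ σ ∈ S, (lam ^ perim σ)⁻¹ with hZdef
    have hZ0 : (0:ℝ) < (Real.sqrt 2 / lam) ^ m := by positivity
    have hZpos : 0 < Z := lt_of_lt_of_le hZ0 hZ
    set T := S.filter (fun σ => (perim σ : ℝ) ≤ β * (2 * (n:ℝ) - 2)) with hT
    set B : ℝ := Fsum f n * ν ^ ((1-L) * (β * (2*(n:ℝ)-2))) with hBdef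
    have hB0 : 0 ≤ B := by
      rw [hBdef]
      exact mul_nonneg (Fsum_nonneg f n) (Real.rpow_nonneg (le_of_lt hν0) _)
    have hnum0 : 0 ≤ ∑ σ ∈ T, (lam ^ perim σ)⁻¹ :=
      Finset.sum_nonneg fun σ _ => by positivity
    have hnum : ∑ σ ∈ T, (lam ^ perim σ)⁻¹ ≤ (2*(n:ℝ)+1) * B := by
      have hmap : ∀ σ ∈ T, perim σ ∈ Finset.range (2*n+1) := by
        intro σ hσ
        have hσS : σ ∈ S := (Finset.mem_filter.mp hσ).1
        have := (hperim σ hσS).2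
        exact Finset.mem_range.mpr (by omega)
      rw [← Finset.sum_fiberwise_of_maps_to hmap]
      have hterm : ∀ k ∈ Finset.range (2*n+1),
          ∑ σ ∈ T.filter (fun σ => perim σ = k), (lam ^ perim σ)⁻¹ ≤ B := by
        intro k hk
        have hinner : ∑ σ ∈ T.filter (fun σ => perim σ = k), (lam ^ perim σ)⁻¹
            = ((T.filter (fun σ => perim σ = k)).card : ℝ) * (lam ^ k)⁻¹ := by
          rw [Finset.sum_congr rfl (fun σ hσ => by
            rw [(Finset.mem_filter.mp hσ).2]), Finset.sum_const, nsmul_eq_mul]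
        rw [hinner]
        rcases Finset.eq_empty_or_nonempty (T.filter (fun σ => perim σ = k)) with he | hne
        · rw [he]; simpa using hB0
        · obtain ⟨σ0, hσ0⟩ := hne
          have hσ0f := Finset.mem_filter.mp hσ0
          have hkval : perim σ0 = k := hσ0f.2
          have hσ0T := Finset.mem_filter.mp hσ0f.1
          have hkle : (k:ℝ) ≤ β * (2*(n:ℝ)-2) := by rw [← hkval]; exact hσ0T.2
          have hsub : T.filter (fun σ => perim σ = k) ⊆ S.filter (fun σ => perim σ = k) :=
            Finset.filter_subset_filter _ (Finset.filter_subset _ _)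
          have hcard : ((T.filter (fun σ => perim σ = k)).card : ℝ) ≤ f k * ν ^ k := by
            refine le_trans ?_ (hcount k)
            exact_mod_cast Finset.card_le_card hsub
          have hνk : (0:ℝ) < ν ^ k := pow_pos hν0 k
          have hfk0 : 0 ≤ f k := by
            have hc0 : (0:ℝ) ≤ f k * ν ^ k := le_trans (Nat.cast_nonneg _) hcard
            exact le_of_mul_le_mul_right (by simpa using hc0) hνk
          have hlamk : ((lam:ℝ) ^ k)⁻¹ = ν ^ (-(L * k)) := by
            rw [← hlamv, ← Real.rpow_natCast (ν ^ L) k, ← Real.rpow_mul (le_of_lt hν0),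
              ← Real.rpow_neg (le_of_lt hν0)]
          have hνkr : (ν:ℝ) ^ k = ν ^ ((k:ℝ)) := (Real.rpow_natCast ν k).symm
          have hstep : ((T.filter (fun σ => perim σ = k)).card : ℝ) * (lam ^ k)⁻¹
              ≤ f k * ν ^ ((1-L) * (k:ℝ)) := by
            calc ((T.filter (fun σ => perim σ = k)).card : ℝ) * (lam ^ k)⁻¹
                ≤ (f k * ν ^ k) * (lam ^ k)⁻¹ := by
                  apply mul_le_mul_of_nonneg_right hcard (by positivity)
              _ = f k * ν ^ ((1-L) * (k:ℝ)) := by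
                  rw [hlamk, hνkr, mul_assoc, ← Real.rpow_add hν0]
                  ring_nf
          refine le_trans hstep ?_
          rw [hBdef]
          have hk2n : k ≤ 2*n := Nat.lt_succ_iff.mp (Finset.mem_range.mp hk)
          have hexp : ν ^ ((1-L) * (k:ℝ)) ≤ ν ^ ((1-L) * (β * (2*(n:ℝ)-2))) := by
            apply (Real.rpow_le_rpow_left_iff hν1).mpr
            apply mul_le_mul_of_nonneg_left hkle (by linarith)
          exact mul_le_mul (le_Fsum f hk2n) hexp
            (Real.rpow_nonneg (le_of_lt hν0) _) (Fsum_nonneg f n)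
      calc ∑ k ∈ Finset.range (2*n+1), ∑ σ ∈ T.filter (fun σ => perim σ = k), (lam ^ perim σ)⁻¹
          ≤ ∑ _k ∈ Finset.range (2*n+1), B := Finset.sum_le_sum hterm
        _ = (2*(n:ℝ)+1) * B := by
            rw [Finset.sum_const, Finset.card_range, nsmul_eq_mul]
            push_cast; ring
    have hZ0v : (Real.sqrt 2 / lam) ^ m = ν ^ ((A/2 - L) * (2*(n:ℝ)-2)) := by
      have hsqrt2 : Real.sqrt 2 = ν ^ (A/2) := by
        rw [show A/2 = A * (1/2) by ring, Real.rpow_mul (le_of_lt hν0), hA,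
          Real.rpow_logb hν0 hνne (by norm_num : (0:ℝ) < 2), Real.sqrt_eq_rpow]
      rw [hsqrt2, ← hlamv, ← Real.rpow_sub hν0, ← Real.rpow_natCast (ν ^ (A/2 - L)) m,
        ← Real.rpow_mul (le_of_lt hν0), hmcast]
    calc (∑ σ ∈ T, (lam ^ perim σ)⁻¹) / Z
        ≤ (∑ σ ∈ T, (lam ^ perim σ)⁻¹) / (Real.sqrt 2 / lam) ^ m :=
          div_le_div_of_nonneg_left hnum0 hZ0 hZ
      _ ≤ ((2*(n:ℝ)+1) * B) / (Real.sqrt 2 / lam) ^ m :=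
          (div_le_div_iff_of_pos_right hZ0).mpr hnum
      _ = (2*(n:ℝ)+1) * Fsum f n * ν ^ (c₃ * Real.sqrt n - β * c₃ * (2*(n:ℝ)-2))
            * ν ^ (-(c₃ * Real.sqrt n)) := by
          rw [hZ0v, hBdef, div_eq_mul_inv, ← Real.rpow_neg (le_of_lt hν0)]
          have hν2 : ν ^ ((1-L) * (β * (2*(n:ℝ)-2))) * ν ^ (-((A/2 - L) * (2*(n:ℝ)-2)))
              = ν ^ (c₃ * Real.sqrt n - β * c₃ * (2*(n:ℝ)-2)) * ν ^ (-(c₃ * Real.sqrt n)) := by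
            rw [← Real.rpow_add hν0, ← Real.rpow_add hν0]
            congr 1
            rw [hc₃def]; field_simp; ring
          calc (2*(n:ℝ)+1) * (Fsum f n * ν ^ ((1-L) * (β * (2*(n:ℝ)-2)))) * ν ^ (-((A/2 - L) * (2*(n:ℝ)-2)))
              = (2*(n:ℝ)+1) * Fsum f n * (ν ^ ((1-L) * (β * (2*(n:ℝ)-2))) * ν ^ (-((A/2 - L) * (2*(n:ℝ)-2)))) := by
                ring
            _ = (2*(n:ℝ)+1) * Fsum f n * (ν ^ (c₃ * Real.sqrt n - β * c₃ * (2*(n:ℝ)-2)) * ν ^ (-(c₃ * Real.sqrt n))) := by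
                rw [hν2]
            _ = (2*(n:ℝ)+1) * Fsum f n * ν ^ (c₃ * Real.sqrt n - β * c₃ * (2*(n:ℝ)-2)) * ν ^ (-(c₃ * Real.sqrt n)) := by
                ring
end

section
/- If a connected hole-free particle configuration σ on the triangular lattice has every particle incident to at least one occupied triangle, then its perimeter is at least √(πn/√3) > √n, where n is the number of particles. -/
/-!
Fix one of the functionals `x`, `y`, `x - y`, taking `a` distinct values on `σ`. Between any two
consecutive occupied levels, connectivity provides an occupied edge crossing the strip, and the
crossing edges of a strip are linearly ordered; the first and the last one each border a face
that is not fully occupied. Each occupied edge crosses strips of exactly two of the three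
families, so `2 p ≥ 2 (a - 1) + 2 (b - 1) + 2 (c - 1)`. Any two of the functionals determine a
vertex, whence `n ≤ a b` and `n ≤ b c`, and an occupied triangle forces `a, b, c ≥ 2`. Together
these give `9 n ≤ 4 p²`, and `π / √3 < 9 / 4`.
-/

open Finset

/-- A vertex is incident to an occupied triangle of σ if it is one of the three
vertices of some lattice face all of whose vertices are occupied. -/
def InOccupiedTriangle (σ : Config) (v : ℤ × ℤ) : Prop :=
  ∃ w : ℤ × ℤ, w ∈ σ ∧
    ((shift w (1,0) ∈ σ ∧ shift w (1,1) ∈ σ ∧ (v = w ∨ v = shift w (1,0) ∨ v = shift w (1,1))) ∨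
     (shift w (0,1) ∈ σ ∧ shift w (1,1) ∈ σ ∧ (v = w ∨ v = shift w (0,1) ∨ v = shift w (1,1))))


section Vacancy

variable {α : Type*} [DecidableEq α]

def vacancy (s : Finset α) (a : α) : ℕ := if a ∈ s then 0 else 1

lemma vacancy_eq_one {s : Finset α} {a : α} (h : a ∉ s) : vacancy s a = 1 := if_neg h

lemma vacancy_filter {β : Type*} [DecidableEq β] {s : Finset α} (g : α → β) (b : β) {a : α}
    (ha : g a = b) : vacancy (s.filter (g · = b)) a = vacancy s a := by
  simp [vacancy, ha]

/-- The `key`-largest element of `s` has its `next` outside `s`, the `key`-smallest its `prev`. -/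
lemma two_le_sum_vacancy_next_add_vacancy_prev {β : Type*} [LinearOrder β] {s : Finset α}
    (hs : s.Nonempty) (key : α → β) (next prev : α → α)
    (hnext : ∀ a ∈ s, key a < key (next a)) (hprev : ∀ a ∈ s, key (prev a) < key a) :
    2 ≤ ∑ a ∈ s, (vacancy s (next a) + vacancy s (prev a)) := by
  obtain ⟨top, htop, htop_max⟩ := s.exists_max_image key hs
  obtain ⟨bot, hbot, hbot_min⟩ := s.exists_min_image key hs
  have h_top : vacancy s (next top) = 1 :=
    vacancy_eq_one fun h => (hnext top htop).not_ge (htop_max _ h)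
  have h_bot : vacancy s (prev bot) = 1 :=
    vacancy_eq_one fun h => (hprev bot hbot).not_ge (hbot_min _ h)
  rw [sum_add_distrib]
  have := single_le_sum (f := fun a => vacancy s (next a)) (fun _ _ => Nat.zero_le _) htop
  have := single_le_sum (f := fun a => vacancy s (prev a)) (fun _ _ => Nat.zero_le _) hbot
  omega

end Vacancy

lemma card_le_card_image_mul_card_image {α β γ : Type*} [DecidableEq β] [DecidableEq γ]
    {s : Finset α} (f : α → β) (g : α → γ) (hfg : Set.InjOn (fun a => (f a, g a)) s) :
    #s ≤ #(s.image f) * #(s.image g) := by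
  rw [← card_product]
  exact card_le_card_of_injOn _ (fun a ha => mem_product.2
    ⟨mem_image_of_mem f ha, mem_image_of_mem g ha⟩) hfg

lemma Relation.ReflTransGen.exists_step_of_le_of_lt {α : Type*} {r : α → α → Prop}
    {f : α → ℤ} (hf : ∀ x y, r x y → f y ≤ f x + 1) {a b : α} (hab : ReflTransGen r a b)
    {c : ℤ} (ha : f a ≤ c) (hb : c < f b) : ∃ x y, r x y ∧ f x = c ∧ f y = c + 1 := by
  induction hab with
  | refl => omega
  | @tail y z _ hyz ih =>
    by_cases hy : f y ≤ c
    · exact ⟨y, z, hyz, by linarith [hf y z hyz], by linarith [hf y z hyz]⟩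
    · exact ih (by omega)

lemma triAdj_iff_s18 {v w : ℤ × ℤ} : TriAdj v w ↔ w - v ∈ triNbrs := Iff.rfl

/-- Summed over the occupied edges `v → v + d`, the number of the two adjacent faces, with third
vertices `v + p` and `v + q`, that are not fully occupied. -/
def edgeBoundary (σ : Config) (d p q : ℤ × ℤ) : ℕ :=
  ∑ v ∈ σ with v + d ∈ σ, (vacancy σ (v + p) + vacancy σ (v + q))

lemma perim_eq_edgeBoundary (σ : Config) :
    perim σ = edgeBoundary σ (1, 0) (1, 1) (0, -1) + edgeBoundary σ (0, 1) (1, 1) (-1, 0) +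
      edgeBoundary σ (1, 1) (1, 0) (0, 1) := rfl

lemma edgeBoundary_comm (σ : Config) (d p q : ℤ × ℤ) :
    edgeBoundary σ d p q = edgeBoundary σ d q p :=
  sum_congr rfl fun _ _ => add_comm _ _

lemma edgeBoundary_neg (σ : Config) (d p q : ℤ × ℤ) :
    edgeBoundary σ (-d) (p - d) (q - d) = edgeBoundary σ d p q := by
  refine sum_nbij' (· - d) (· + d) ?_ ?_ (fun _ _ => sub_add_cancel _ _)
    (fun _ _ => add_sub_cancel_right _ _) fun v _ => ?_
  · intro v hv
    simp only [mem_filter, ← sub_eq_add_neg] at hv ⊢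
    simpa [hv.1] using hv.2
  · intro v hv
    simp only [mem_filter, ← sub_eq_add_neg, add_sub_cancel_right] at hv ⊢
    exact ⟨hv.2, hv.1⟩
  · simp only [sub_add_eq_add_sub, add_sub_assoc]

section Strip

variable (σ : Config) (d₁ d₂ : ℤ × ℤ)

def stripBoundary : ℕ := edgeBoundary σ d₁ d₂ (d₁ - d₂) + edgeBoundary σ d₂ (d₂ - d₁) d₁

/-- For a functional `f` with `f d₁ = f d₂ = 1`, the lattice edges crossing a strip
`c ≤ f ≤ c + 1` are the edges `v → v + d₁` (`inl v`) and `v → v + d₂` (`inr v`). Along the strip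
they alternate, and `stripNext` steps to the following crossing edge, with which an edge bounds
a face; that face is fully occupied exactly when both edges are. -/
def stripNext : (ℤ × ℤ) ⊕ (ℤ × ℤ) → (ℤ × ℤ) ⊕ (ℤ × ℤ) :=
  Sum.elim Sum.inr fun v => Sum.inl (v + (d₂ - d₁))

def stripPrev : (ℤ × ℤ) ⊕ (ℤ × ℤ) → (ℤ × ℤ) ⊕ (ℤ × ℤ) :=
  Sum.elim (fun v => Sum.inr (v + (d₁ - d₂))) Sum.inl

def stripEdges : Finset ((ℤ × ℤ) ⊕ (ℤ × ℤ)) :=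
  (σ.filter (· + d₁ ∈ σ)).disjSum (σ.filter (· + d₂ ∈ σ))

lemma stripBoundary_eq_sum_stripEdges :
    stripBoundary σ d₁ d₂ = ∑ e ∈ stripEdges σ d₁ d₂,
      (vacancy (stripEdges σ d₁ d₂) (stripNext d₁ d₂ e) +
        vacancy (stripEdges σ d₁ d₂) (stripPrev d₁ d₂ e)) := by
  rw [stripBoundary, stripEdges, sum_disjSum]
  congr 1 <;> refine sum_congr rfl fun v hv => ?_ <;> rw [mem_filter] at hv <;>
    simp [vacancy, stripNext, stripPrev, hv, ← add_sub_assoc]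

variable {σ d₁ d₂}

lemma stripEdges_filter_nonempty (f : ℤ × ℤ →+ ℤ) (hf₁ : f d₁ = 1) (hf₂ : f d₂ = 1)
    (hf : ∀ d ∈ triNbrs, f d < 1 ∨ d = d₁ ∨ d = d₂) (hconn : ConnectedConfig σ) {u w : ℤ × ℤ}
    (hu : u ∈ σ) (hw : w ∈ σ) {c : ℤ} (huc : f u ≤ c) (hcw : c < f w) :
    (stripEdges σ d₁ d₂ |>.filter (Sum.elim f f · = c)).Nonempty := by
  have hstep : ∀ x y : ℤ × ℤ, f y = f x + f (y - x) := fun x y => by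
    rw [← map_add, add_sub_cancel]
  have hle : ∀ d ∈ triNbrs, f d ≤ 1 := fun d hd => by rcases hf d hd with h | rfl | rfl <;> omega
  obtain ⟨x, y, ⟨hxy, hx, hy⟩, hxc, hyc⟩ := (hconn.2 u hu w hw).exists_step_of_le_of_lt
    (fun x y ⟨hxy, _⟩ => by linarith [hstep x y, hle _ (triAdj_iff_s18.1 hxy)]) huc hcw
  rcases hf _ (triAdj_iff_s18.1 hxy) with h | h | h
  · linarith [hstep x y]
  · exact ⟨Sum.inl x, by simp [stripEdges, hx, hxc, ← h, hy]⟩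
  · exact ⟨Sum.inr x, by simp [stripEdges, hx, hxc, ← h, hy]⟩

theorem two_mul_card_image_sub_one_le_stripBoundary (f : ℤ × ℤ →+ ℤ) (hf₁ : f d₁ = 1)
    (hf₂ : f d₂ = 1) (hf : ∀ d ∈ triNbrs, f d < 1 ∨ d = d₁ ∨ d = d₂) (hconn : ConnectedConfig σ)
    (g : ℤ × ℤ →+ ℤ) (hg : g d₁ < g d₂) :
    2 * (#(σ.image f) - 1) ≤ stripBoundary σ d₁ d₂ := by
  set E := stripEdges σ d₁ d₂
  set L := σ.image f
  have hL : L.Nonempty := hconn.1.image f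
  obtain ⟨w, hw, hw_max⟩ := mem_image.1 (L.max'_mem hL)
  have level_next : ∀ e, Sum.elim f f (stripNext d₁ d₂ e) = Sum.elim f f e := by
    rintro (v | v) <;> simp [stripNext, hf₁, hf₂]
  have level_prev : ∀ e, Sum.elim f f (stripPrev d₁ d₂ e) = Sum.elim f f e := by
    rintro (v | v) <;> simp [stripPrev, hf₁, hf₂]
  -- twice the `g`-coordinate of the midpoint of the edge
  let key := Sum.elim (fun v => 2 * g v + g d₁) (fun v => 2 * g v + g d₂)
  have key_next : ∀ e, key e < key (stripNext d₁ d₂ e) := by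
    rintro (v | v) <;> simp [key, stripNext] <;> linarith
  have key_prev : ∀ e, key (stripPrev d₁ d₂ e) < key e := by
    rintro (v | v) <;> simp [key, stripPrev] <;> linarith
  have two_le_strip : ∀ c ∈ L.erase (L.max' hL), 2 ≤ ∑ e ∈ E with Sum.elim f f e = c,
      (vacancy E (stripNext d₁ d₂ e) + vacancy E (stripPrev d₁ d₂ e)) := by
    intro c hc
    obtain ⟨hc_max, hcL⟩ := mem_erase.1 hc
    obtain ⟨u, hu, rfl⟩ := mem_image.1 hcL
    have hlt : f u < f w := hw_max ▸ lt_of_le_of_ne (L.le_max' _ hcL) hc_max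
    have := two_le_sum_vacancy_next_add_vacancy_prev
      (stripEdges_filter_nonempty f hf₁ hf₂ hf hconn hu hw le_rfl hlt) key _ _
      (fun e _ => key_next e) (fun e _ => key_prev e)
    refine this.trans_eq (sum_congr rfl fun e he => ?_)
    rw [vacancy_filter _ _ ((level_next e).trans (mem_filter.1 he).2),
      vacancy_filter _ _ ((level_prev e).trans (mem_filter.1 he).2)]
  calc 2 * (#L - 1) = ∑ _c ∈ L.erase (L.max' hL), 2 := by
        rw [sum_const, card_erase_of_mem (L.max'_mem hL), smul_eq_mul, mul_comm]
    _ ≤ ∑ c ∈ L.erase (L.max' hL), ∑ e ∈ E with Sum.elim f f e = c,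
        (vacancy E (stripNext d₁ d₂ e) + vacancy E (stripPrev d₁ d₂ e)) := sum_le_sum two_le_strip
    _ ≤ ∑ e ∈ E, (vacancy E (stripNext d₁ d₂ e) + vacancy E (stripPrev d₁ d₂ e)) :=
        sum_fiberwise_le_sum_of_sum_fiber_nonneg fun _ _ => Nat.zero_le _
    _ = stripBoundary σ d₁ d₂ := (stripBoundary_eq_sum_stripEdges σ d₁ d₂).symm

end Strip

lemma two_mul_perim_eq_sum_stripBoundary (σ : Config) :
    2 * perim σ = stripBoundary σ (1, 0) (1, 1) + stripBoundary σ (0, 1) (1, 1) +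
      stripBoundary σ (0, -1) (1, 0) := by
  have hrev := edgeBoundary_neg σ (0, 1) (1, 1) (-1, 0)
  norm_num [stripBoundary, perim_eq_edgeBoundary] at hrev ⊢
  rw [hrev, edgeBoundary_comm σ (1, 1) (0, 1)]
  ring

lemma one_lt_card_image_of_inOccupiedTriangle {σ : Config} {v : ℤ × ℤ}
    (h : InOccupiedTriangle σ v) :
    1 < #(σ.image (AddMonoidHom.fst ℤ ℤ)) ∧ 1 < #(σ.image (AddMonoidHom.snd ℤ ℤ)) ∧
      1 < #(σ.image (AddMonoidHom.fst ℤ ℤ - AddMonoidHom.snd ℤ ℤ)) := by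
  have one_lt {f : ℤ × ℤ → ℤ} {a b : ℤ × ℤ} (ha : a ∈ σ) (hb : b ∈ σ) (hab : f a ≠ f b) :
      1 < #(σ.image f) :=
    one_lt_card.2 ⟨f a, mem_image_of_mem f ha, f b, mem_image_of_mem f hb, hab⟩
  obtain ⟨w, hw, ⟨hu, hd, -⟩ | ⟨hu, hd, -⟩⟩ := h <;> simp only [shift] at hu hd <;>
    exact ⟨one_lt hw hd (by simp), one_lt hw hd (by simp), one_lt hw hu (by simp)⟩

lemma nine_mul_le_four_mul_sq {n x y z p : ℕ} (hx : 1 < x) (hy : 1 < y) (hz : 1 < z)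
    (hxy : n ≤ x * y) (hyz : n ≤ y * z) (hp : x + y + z ≤ p + 3) :
    9 * n ≤ 4 * p ^ 2 := by
  have hsum : x + y + z ≤ 2 * p := by omega
  nlinarith

lemma pi_div_sqrt_three_lt : Real.pi / √3 < 9 / 4 := by
  have h3 : (17 / 10 : ℝ) < √3 := by
    rw [Real.lt_sqrt (by norm_num)]; norm_num
  rw [div_lt_iff₀ (by positivity)]
  linarith [Real.pi_lt_d2]

lemma one_lt_pi_div_sqrt_three : 1 < Real.pi / √3 := by
  have h3 : √3 < 3 := by
    rw [Real.sqrt_lt' (by norm_num)]; norm_num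
  rw [one_lt_div (by positivity)]
  linarith [Real.pi_gt_three]

theorem perimeter_isoperimetric_general (σ : Config) (n : ℕ)
    (hcard : σ.card = n) (hconn : ConnectedConfig σ)
    (htri : ∀ v ∈ σ, InOccupiedTriangle σ v) :
    Real.sqrt (Real.pi * n / Real.sqrt 3) ≤ (perim σ : ℝ) ∧
      Real.sqrt n < Real.sqrt (Real.pi * n / Real.sqrt 3) := by
  subst hcard
  obtain ⟨v, hv⟩ := hconn.1
  obtain ⟨hx, hy, hz⟩ := one_lt_card_image_of_inOccupiedTriangle (htri v hv)
  set fst := AddMonoidHom.fst ℤ ℤ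
  set snd := AddMonoidHom.snd ℤ ℤ
  have hX := two_mul_card_image_sub_one_le_stripBoundary (d₁ := (1, 0)) (d₂ := (1, 1)) fst
    (by simp [fst]) (by simp [fst]) (by simp [fst, triNbrs]) hconn snd (by simp [snd])
  have hY := two_mul_card_image_sub_one_le_stripBoundary (d₁ := (0, 1)) (d₂ := (1, 1)) snd
    (by simp [snd]) (by simp [snd]) (by simp [snd, triNbrs]) hconn fst (by simp [fst])
  have hZ := two_mul_card_image_sub_one_le_stripBoundary (d₁ := (0, -1)) (d₂ := (1, 0))
    (fst - snd) (by simp [fst, snd]) (by simp [fst, snd]) (by simp [fst, snd, triNbrs]) hconn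
    fst (by simp [fst])
  have hXY := card_le_card_image_mul_card_image (s := σ) fst snd fun a _ b _ h => by
    simp_all [fst, snd, Prod.ext_iff]
  have hYZ := card_le_card_image_mul_card_image (s := σ) snd (fst - snd) fun a _ b _ h => by
    simp [fst, snd, Prod.ext_iff] at h; exact Prod.ext (by omega) (by omega)
  have h9 : (9 * #σ : ℝ) ≤ 4 * perim σ ^ 2 := by
    exact_mod_cast nine_mul_le_four_mul_sq hx hy hz hXY hYZ
      (by have := two_mul_perim_eq_sum_stripBoundary σ; omega)
  have hpos : (0 : ℝ) < #σ := by exact_mod_cast card_pos.2 ⟨v, hv⟩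
  rw [mul_div_right_comm]
  refine ⟨(Real.sqrt_le_left (by positivity)).2 ?_, Real.sqrt_lt_sqrt hpos.le
    (lt_mul_of_one_lt_left hpos one_lt_pi_div_sqrt_three)⟩
  linarith [mul_le_mul_of_nonneg_right pi_div_sqrt_three_lt.le hpos.le]

/-- if every particle of a connected hole-free configuration σ of
n particles is incident to an occupied triangle, then p(σ) ≥ √(πn/√3) > √n. -/
theorem perimeter_isoperimetric (σ : Config) (n : ℕ) (hn : 1 ≤ n)
    (hcard : σ.card = n) (hconn : ConnectedConfig σ) (hhole : HoleFree σ)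
    (htri : ∀ v ∈ σ, InOccupiedTriangle σ v) :
    Real.sqrt (Real.pi * n / Real.sqrt 3) ≤ (perim σ : ℝ) ∧
      Real.sqrt n < Real.sqrt (Real.pi * n / Real.sqrt 3) :=
  perimeter_isoperimetric_general σ n hcard hconn htri
end
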